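/- arXiv:math/9903088 — 10 statements merged into one kernel-verified Lean document; each statement's English description precedes it below -/
import Mathlib

section
/- If a is an invertible n×n matrix over a division ring T, then the (j,i) entry of a⁻¹ is nonzero if and only if the (n-1)×(n-1) matrix a(i,j), obtained from a by deleting row i and column j, is invertible. -/
open Matrix Finset

theorem inverse_entry_ne_zero_iff_minor_invertible
    {n : ℕ} {T : Type*} [DivisionRing T]
    (a : (Matrix (Fin (n + 1)) (Fin (n + 1)) T)ˣ) (i j : Fin (n + 1)) :
    ((a⁻¹).val j i ≠ 0) ↔ IsUnit (a.val.submatrix i.succAbove j.succAbove) := by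
  set b := (a⁻¹).val with hb
  set A := a.val.submatrix i.succAbove j.succAbove with hA
  have hab : a.val * b = 1 := by rw [hb, ← Units.val_mul, mul_inv_cancel]; rfl
  have hba : b * a.val = 1 := by rw [hb, ← Units.val_mul, inv_mul_cancel]; rfl
  have E : ∀ x y, ∑ z, a.val x z * b z y = if x = y then 1 else 0 := by
    intro x y
    have := congrArg (fun m => m x y) hab
    simpa [Matrix.mul_apply, Matrix.one_apply] using this
  have F : ∀ x y, ∑ z, b x z * a.val z y = if x = y then 1 else 0 := by
    intro x y
    have := congrArg (fun m => m x y) hba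
    simpa [Matrix.mul_apply, Matrix.one_apply] using this
  constructor
  · intro hs
    set s := b j i with hsdef
    set X : Matrix (Fin n) (Fin n) T :=
      Matrix.of fun m k => b (j.succAbove m) (i.succAbove k)
        - b (j.succAbove m) i * s⁻¹ * b j (i.succAbove k) with hX
    have hAX : A * X = 1 := by
      ext k m
      have h1 := E (i.succAbove k) (i.succAbove m)
      have h2 := E (i.succAbove k) i
      rw [Fin.sum_univ_succAbove _ j] at h1 h2
      rw [if_neg (Fin.succAbove_ne i k)] at h2
      simp only [Fin.succAbove_right_inj] at h1
      have h1' : ∑ l, a.val (i.succAbove k) (j.succAbove l) * b (j.succAbove l) (i.succAbove m)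
          = (if k = m then 1 else 0) - a.val (i.succAbove k) j * b j (i.succAbove m) := by
        rw [← h1, add_sub_cancel_left]
      have h2' : ∑ l, a.val (i.succAbove k) (j.succAbove l) * b (j.succAbove l) i
          = -(a.val (i.succAbove k) j * s) := by
        rw [eq_neg_iff_add_eq_zero, add_comm]; exact h2
      rw [hX, hA]
      simp only [Matrix.mul_apply, Matrix.of_apply, Matrix.submatrix_apply, Matrix.one_apply,
        mul_sub, Finset.sum_sub_distrib, ← mul_assoc, ← Finset.sum_mul]
      rw [h1', h2', neg_mul, neg_mul, sub_neg_eq_add, mul_assoc _ s s⁻¹,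
        mul_inv_cancel₀ hs, mul_one, sub_add_cancel]
    have hXA : X * A = 1 := by
      ext m k
      have h1 := F (j.succAbove m) (j.succAbove k)
      have h2 := F j (j.succAbove k)
      rw [Fin.sum_univ_succAbove _ i] at h1 h2
      rw [if_neg (Ne.symm (Fin.succAbove_ne j k))] at h2
      simp only [Fin.succAbove_right_inj] at h1
      have h1' : ∑ l, b (j.succAbove m) (i.succAbove l) * a.val (i.succAbove l) (j.succAbove k)
          = (if m = k then 1 else 0) - b (j.succAbove m) i * a.val i (j.succAbove k) := by
        rw [← h1, add_sub_cancel_left]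
      have h2' : ∑ l, b j (i.succAbove l) * a.val (i.succAbove l) (j.succAbove k)
          = -(s * a.val i (j.succAbove k)) := by
        rw [eq_neg_iff_add_eq_zero, add_comm]; exact h2
      rw [hX, hA]
      simp only [Matrix.mul_apply, Matrix.of_apply, Matrix.submatrix_apply, Matrix.one_apply,
        sub_mul, Finset.sum_sub_distrib, mul_assoc, ← Finset.mul_sum]
      rw [h1', h2']
      rw [show b (j.succAbove m) i * (s⁻¹ * -(s * a.val i (j.succAbove k)))
          = -(b (j.succAbove m) i * a.val i (j.succAbove k)) by
        rw [mul_neg, ← mul_assoc s⁻¹ s, inv_mul_cancel₀ hs, one_mul, mul_neg]]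
      rw [sub_neg_eq_add, sub_add_cancel]
    exact ⟨⟨A, X, hAX, hXA⟩, rfl⟩
  · intro h hs
    obtain ⟨u, hu⟩ := h
    have hAC : A * u.inv = 1 := by rw [← hu]; exact u.val_inv
    set R : Fin n → T := fun l => b j (i.succAbove l) with hR
    have hRA : R ᵥ* A = 0 := by
      funext m
      have h2 := F j (j.succAbove m)
      rw [Fin.sum_univ_succAbove _ i] at h2
      rw [if_neg (Ne.symm (Fin.succAbove_ne j m)), hs, zero_mul, zero_add] at h2
      simpa [Matrix.vecMul, dotProduct, hR, hA] using h2
    have hR0 : R = 0 := by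
      have : R ᵥ* (A * u.inv) = R := by rw [hAC, Matrix.vecMul_one]
      rw [← Matrix.vecMul_vecMul, hRA, Matrix.zero_vecMul] at this
      exact this.symm
    have h3 := F j j
    rw [Fin.sum_univ_succAbove _ i, if_pos rfl, hs, zero_mul, zero_add] at h3
    have : (0 : T) = 1 := by
      rw [← h3]
      symm; apply Finset.sum_eq_zero
      intro l _
      have : R l = 0 := by rw [hR0]; rfl
      simp only [hR] at this
      rw [this, zero_mul]
    exact one_ne_zero this.symm
end

section
/- If a is an invertible n×n matrix over an infinite division ring T, then the subsemigroup generated by a together with all invertible diagonal matrices contains a matrix all of whose diagonal entries are nonzero. -/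
set_option maxHeartbeats 1000000

section Aux

variable {T : Type*} [DivisionRing T]

/-- Key genericity lemma: over an infinite division ring one can choose values
`t j`, all nonzero, making finitely many "affine sandwich" expressions nonzero. -/
lemma gen_lemma [Infinite T] {ι : Type*} [Fintype ι] :
    ∀ (n : ℕ) (B C : ι → Fin n → T) (e : ι → T),
      (∀ i, (∃ j, B i j ≠ 0 ∧ C i j ≠ 0) ∨ e i ≠ 0) →
      ∃ t : Fin n → T, (∀ j, t j ≠ 0) ∧ ∀ i, e i + ∑ j, B i j * t j * C i j ≠ 0 := by
  intro n
  induction n with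
  | zero =>
    intro B C e h
    refine ⟨fun j => j.elim0, fun j => j.elim0, fun i => ?_⟩
    simpa using (h i).resolve_left (by rintro ⟨j, -⟩; exact j.elim0)
  | succ n ih =>
    intro B C e h
    classical
    set l : Fin (n + 1) := Fin.last n with hl
    set w : ι → T := fun i =>
      if B i l ≠ 0 ∧ C i l ≠ 0 then (B i l)⁻¹ * (-(e i)) * (C i l)⁻¹ else 0 with hw
    obtain ⟨v, hv⟩ := (insert (0 : T) (Finset.image w Finset.univ)).exists_notMem
    have hv0 : v ≠ 0 := fun h0 => hv (by simp [h0])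
    have hvw : ∀ i, v ≠ w i := by
      intro i h0
      exact hv (Finset.mem_insert.mpr (Or.inr (Finset.mem_image.mpr ⟨i, Finset.mem_univ i, h0.symm⟩)))
    set e' : ι → T := fun i => e i + B i l * v * C i l with he'
    have key : ∀ i, (∃ j : Fin n, B i j.castSucc ≠ 0 ∧ C i j.castSucc ≠ 0) ∨ e' i ≠ 0 := by
      intro i
      by_cases hbc : B i l ≠ 0 ∧ C i l ≠ 0
      · right
        intro h0
        apply hvw i
        have h1 : B i l * v * C i l = -(e i) :=
          eq_neg_of_add_eq_zero_right h0
        have h2 : (B i l)⁻¹ * (B i l * v * C i l) * (C i l)⁻¹ = v := by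
          rw [mul_assoc (B i l) v, ← mul_assoc ((B i l)⁻¹), inv_mul_cancel₀ hbc.1, one_mul,
            mul_assoc, mul_inv_cancel₀ hbc.2, mul_one]
        rw [hw]
        simp only []
        rw [if_pos hbc, ← h1, h2]
      · have hterm : B i l * v * C i l = 0 := by
          rcases not_and_or.mp hbc with hb | hc
          · rw [not_not.mp hb, zero_mul, zero_mul]
          · rw [not_not.mp hc, mul_zero]
        rcases h i with ⟨j, hj1, hj2⟩ | he
        · rcases Fin.eq_castSucc_or_eq_last j with ⟨j', rfl⟩ | rfl
          · exact Or.inl ⟨j', hj1, hj2⟩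
          · exact absurd ⟨hj1, hj2⟩ hbc
        · right
          simp only [he', hterm, add_zero]
          exact he
    obtain ⟨t', ht'0, ht'⟩ := ih (fun i j => B i j.castSucc) (fun i j => C i j.castSucc) e' key
    refine ⟨Fin.snoc t' v, ?_, ?_⟩
    · intro j
      refine Fin.lastCases ?_ ?_ j
      · simpa using hv0
      · intro j'; simpa using ht'0 j'
    · intro i
      have h2 := ht' i
      rw [Fin.sum_univ_castSucc]
      simp only [Fin.snoc_castSucc, Fin.snoc_last]
      simp only [he'] at h2
      have : e i + (∑ j : Fin n, B i j.castSucc * t' j * C i j.castSucc + B i l * v * C i l)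
          = e i + B i l * v * C i l + ∑ j : Fin n, B i j.castSucc * t' j * C i j.castSucc := by
        abel
      rw [this]
      exact h2

/-- Every invertible matrix over a division ring has a nonzero transversal. -/
lemma exists_transversal {n : ℕ} (a : (Matrix (Fin n) (Fin n) T)ˣ) :
    ∃ σ : Equiv.Perm (Fin n), ∀ i, a.val i (σ i) ≠ 0 := by
  classical
  set t : Fin n → Finset (Fin n) := fun i => Finset.univ.filter (fun j => a.val i j ≠ 0) with ht
  have hrows : LinearIndependent T (fun i : Fin n => a.val i) := by
    rw [Fintype.linearIndependent_iff]
    intro g hg i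
    have hvm : Matrix.vecMul g a.val = 0 := by
      funext j
      have := congrFun hg j
      simpa [Matrix.vecMul, dotProduct, Finset.sum_apply] using this
    have : g = Matrix.vecMul (Matrix.vecMul g a.val) (a⁻¹).val := by
      rw [Matrix.vecMul_vecMul, Units.mul_inv, Matrix.vecMul_one]
    rw [hvm, Matrix.zero_vecMul] at this
    simp [this]
  have hall : ∀ s : Finset (Fin n), s.card ≤ (s.biUnion t).card := by
    intro s
    by_contra hlt
    push_neg at hlt
    set J := s.biUnion t with hJ
    have hli : LinearIndependent T (fun i : ↥s => fun j : ↥J => a.val i.val j.val) := by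
      rw [Fintype.linearIndependent_iff]
      intro g hg i
      set G : Fin n → T := fun i => if h : i ∈ s then g ⟨i, h⟩ else 0 with hG
      have hsum : ∀ j, ∑ k : Fin n, G k * a.val k j = ∑ k : ↥s, g k * a.val k.val j := by
        intro j
        have h1 : ∑ k ∈ s, G k * a.val k j = ∑ k : Fin n, G k * a.val k j :=
          Finset.sum_subset (Finset.subset_univ s) (fun x _ hx => by simp [hG, hx])
        have h2 : ∑ k : ↥s, G k.val * a.val k.val j = ∑ k ∈ s, G k * a.val k j :=
          Finset.sum_coe_sort s (fun k => G k * a.val k j)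
        rw [← h1, ← h2]
        exact Finset.sum_congr rfl (fun k _ => by simp [hG, k.2])
      have hGz : ∀ k, G k = 0 := by
        apply Fintype.linearIndependent_iff.mp hrows
        funext j
        simp only [Finset.sum_apply, Pi.smul_apply, smul_eq_mul, Pi.zero_apply]
        rw [hsum j]
        by_cases hj : j ∈ J
        · have := congrFun hg ⟨j, hj⟩
          simpa [Finset.sum_apply] using this
        · apply Finset.sum_eq_zero
          intro k _
          have : a.val k.val j = 0 := by
            by_contra hne
            exact hj (Finset.mem_biUnion.mpr ⟨k.val, k.2, by simp [ht, hne]⟩)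
          rw [this, mul_zero]
      have := hGz i.val
      simpa [hG, i.2] using this
    have hcard := hli.fintype_card_le_finrank
    rw [Module.finrank_pi] at hcard
    simp only [Fintype.card_coe] at hcard
    omega
  obtain ⟨f, hinj, hf⟩ := (Finset.all_card_le_biUnion_card_iff_exists_injective t).mp hall
  refine ⟨Equiv.ofBijective f (Finite.injective_iff_bijective.mp hinj), fun i => ?_⟩
  have := hf i
  simp only [ht, Finset.mem_filter] at this
  exact this.2

end Aux

/-- Membership in the semigroup `⟨a, D⟩` generated by `a` and the invertible
diagonal matrices: products `ω₁ ⋯ ω_m` with each factor in `{a} ∪ D` and at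
least one factor equal to `a`. -/
def MemSemigroupGen {n : ℕ} {R : Type*} [Ring R]
    (a b : (Matrix (Fin n) (Fin n) R)ˣ) : Prop :=
  ∃ L : List (Matrix (Fin n) (Fin n) R)ˣ,
    (∀ x ∈ L, x = a ∨ (x.val).IsDiag) ∧ a ∈ L ∧ L.prod = b

theorem exists_mem_semigroup_diag_entries_ne_zero
    {n : ℕ} {T : Type*} [DivisionRing T] [Infinite T] (hn : 2 ≤ n)
    (a : (Matrix (Fin n) (Fin n) T)ˣ) :
    ∃ b : (Matrix (Fin n) (Fin n) T)ˣ, MemSemigroupGen a b ∧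
      ∀ i, b.val i i ≠ 0 := by
  classical
  obtain ⟨σ, hσ⟩ := exists_transversal a
  have main : ∀ k : ℕ, ∃ b : (Matrix (Fin n) (Fin n) T)ˣ,
      MemSemigroupGen a b ∧ ∀ i, b.val i ((σ ^ (k + 1)) i) ≠ 0 := by
    intro k
    induction k with
    | zero =>
      refine ⟨a, ⟨[a], by simp, by simp, by simp⟩, ?_⟩
      simpa using hσ
    | succ k ih =>
      obtain ⟨c, ⟨L, hL, haL, hLp⟩, hc⟩ := ih
      obtain ⟨t, ht0, htv⟩ := gen_lemma n (fun i j => c.val i j)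
        (fun i j => a.val j ((σ ^ (k + 2)) i)) (fun _ => 0)
        (by
          intro i
          left
          refine ⟨(σ ^ (k + 1)) i, hc i, ?_⟩
          have hcomp : (σ ^ (k + 2)) i = σ ((σ ^ (k + 1)) i) := by
            rw [pow_succ']
            rfl
          show a.val ((σ ^ (k + 1)) i) ((σ ^ (k + 2)) i) ≠ 0
          rw [hcomp]
          exact hσ _)
      have hdet : Matrix.diagonal t * Matrix.diagonal (fun j => (t j)⁻¹) = 1 := by
        rw [Matrix.diagonal_mul_diagonal]
        convert Matrix.diagonal_one using 2
        exact funext fun j => mul_inv_cancel₀ (ht0 j)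
      have hdet' : Matrix.diagonal (fun j => (t j)⁻¹) * Matrix.diagonal t = 1 := by
        rw [Matrix.diagonal_mul_diagonal]
        convert Matrix.diagonal_one using 2
        exact funext fun j => inv_mul_cancel₀ (ht0 j)
      set d : (Matrix (Fin n) (Fin n) T)ˣ :=
        ⟨Matrix.diagonal t, Matrix.diagonal (fun j => (t j)⁻¹), hdet, hdet'⟩ with hd
      refine ⟨c * d * a, ⟨L ++ [d, a], ?_, ?_, ?_⟩, ?_⟩
      · intro x hx
        rcases List.mem_append.mp hx with hx | hx
        · exact hL x hx
        · rcases List.mem_cons.mp hx with rfl | hx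
          · exact Or.inr (Matrix.isDiag_diagonal t)
          · simp at hx
            subst hx
            exact Or.inl rfl
      · exact List.mem_append.mpr (Or.inl haL)
      · rw [List.prod_append, hLp]
        simp [mul_assoc]
      · intro i
        have hval : (c * d * a).val = c.val * Matrix.diagonal t * a.val := rfl
        rw [hval]
        have : (c.val * Matrix.diagonal t * a.val) i ((σ ^ (k + 2)) i)
            = ∑ j, c.val i j * t j * a.val j ((σ ^ (k + 2)) i) := by
          rw [Matrix.mul_apply]
          exact Finset.sum_congr rfl (fun j _ => by rw [Matrix.mul_diagonal])
        rw [this]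
        have := htv i
        simpa using this
  obtain ⟨b, hb, hbt⟩ := main (orderOf σ - 1)
  refine ⟨b, hb, fun i => ?_⟩
  have hpos : 0 < orderOf σ := orderOf_pos σ
  have : orderOf σ - 1 + 1 = orderOf σ := Nat.succ_pred_eq_of_pos hpos
  rw [this, pow_orderOf_eq_one] at hbt
  simpa using hbt i
end

section
/- If T is an infinite division ring and a ∈ GL(n,T), then the semigroup ⟨a,D⟩ contains a matrix b such that all diagonal entries of b are nonzero and, whenever b_{ij} = 0, one has b_{ir} b_{rj} = 0 for every index r. -/
/-!
Let `S` be the support of `a`, viewed as a relation on the indices. An entry of `b * D * c`,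
for `D` diagonal, is additive in each diagonal entry of `D` separately, so over an infinite
division ring a generic invertible `D` avoids every cancellation and the support of `b * D * c` is
the composite of the supports of `b` and `c`. Hence the semigroup contains, for every `k ≥ 1`, a
matrix with support exactly `S ^ k`. The powers of a relation on a finite set are eventually
periodic, so some `S ^ k` is idempotent and in particular transitive; this gives the condition on
the zero entries. If such a matrix `b` had `b i i = 0`, then by transitivity the rows indexed by
`i` and by `A = {k | b i k ≠ 0}` would be `#A + 1` rows supported in the `#A` columns `A`,
contradicting the invertibility of `b`.
-/

open Matrix Finset SetRel

theorem Finite.exists_pos_apply_add_self_eq {X : Type*} [Finite X] (u : ℕ → X)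
    (hu : ∀ j k l, u j = u k → u (j + l) = u (k + l)) : ∃ k, 0 < k ∧ u (k + k) = u k := by
  obtain ⟨p, q, hpq, hu_pq⟩ : ∃ p q, p < q ∧ u p = u q := by
    obtain ⟨p, q, hne, heq⟩ := Finite.exists_ne_map_eq_of_infinite u
    rcases hne.lt_or_gt with h | h
    exacts [⟨p, q, h, heq⟩, ⟨q, p, h, heq.symm⟩]
  set d := q - p
  have hperiod : ∀ m, u (p + m * d) = u p := by
    intro m
    induction m with
    | zero => simp
    | succ m ih =>
      rw [← ih, show p + (m + 1) * d = q + m * d by rw [add_mul]; omega]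
      exact (hu _ _ _ hu_pq).symm
  have hpk : p ≤ (p + 1) * d := by nlinarith [show 1 ≤ d by omega]
  refine ⟨(p + 1) * d, Nat.mul_pos p.succ_pos (by omega), ?_⟩
  have := hu _ _ ((p + 1) * d - p) (hperiod (p + 1))
  rwa [show p + (p + 1) * d + ((p + 1) * d - p) = (p + 1) * d + (p + 1) * d by omega,
    Nat.add_sub_cancel' hpk] at this

namespace SetRel

variable {α : Type*}

def pow (S : SetRel α α) : ℕ → SetRel α α
  | 0 => SetRel.id
  | k + 1 => S.pow k ○ S

theorem pow_one (S : SetRel α α) : S.pow 1 = S := id_comp S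

theorem pow_succ (S : SetRel α α) (k : ℕ) : S.pow (k + 1) = S.pow k ○ S := rfl

theorem pow_add (S : SetRel α α) (j k : ℕ) : S.pow (j + k) = S.pow j ○ S.pow k := by
  induction k with
  | zero => exact (comp_id _).symm
  | succ k ih => rw [← add_assoc, pow_succ, pow_succ, ih, comp_assoc]

theorem exists_pos_isTrans_pow [Finite α] (S : SetRel α α) : ∃ k, 0 < k ∧ (S.pow k).IsTrans := by
  obtain ⟨k, hk, hidem⟩ := Finite.exists_pos_apply_add_self_eq S.pow fun j k l h => by
    rw [pow_add, pow_add, h]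
  exact ⟨k, hk, isTrans_iff_comp_subset_self.2 (by rw [← pow_add, hidem])⟩

end SetRel

namespace Matrix

variable {ι R : Type*}

def supportRel [Zero R] (M : Matrix ι ι R) : SetRel ι ι := {p | M p.1 p.2 ≠ 0}

@[simp] theorem mem_supportRel [Zero R] {M : Matrix ι ι R} {i j : ι} :
    (i, j) ∈ M.supportRel ↔ M i j ≠ 0 := Iff.rfl

section Semiring

variable [Fintype ι] [DecidableEq ι] [Semiring R]

theorem mul_diagonal_mul_apply (b c : Matrix ι ι R) (d : ι → R) (i j : ι) :
    (b * diagonal d * c) i j = ∑ r, b i r * d r * c r j := by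
  simp only [mul_apply (M := b * diagonal d), mul_diagonal]

theorem mul_diagonal_update_mul_apply (b c : Matrix ι ι R) (d : ι → R) (r : ι) (x : R)
    (i j : ι) : (b * diagonal (Function.update d r x) * c) i j =
      b i r * x * c r j + ∑ s ∈ univ.erase r, b i s * d s * c s j := by
  rw [mul_diagonal_mul_apply, ← add_sum_erase _ _ (mem_univ r), Function.update_self]
  congr 1
  exact sum_congr rfl fun s hs => by rw [Function.update_of_ne (ne_of_mem_erase hs)]

theorem supportRel_mul_diagonal_mul_subset (b c : Matrix ι ι R) (d : ι → R) :
    (b * diagonal d * c).supportRel ⊆ b.supportRel ○ c.supportRel := by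
  rintro ⟨i, j⟩ hij
  by_contra hnot
  refine hij (sum_eq_zero fun r _ => ?_)
  by_cases hb : b i r = 0
  · simp [hb]
  · have hc : c r j = 0 := by_contra fun hc => hnot ⟨r, hb, hc⟩
    simp [hc]

end Semiring

section DivisionRing

variable [Fintype ι] [DecidableEq ι] [DivisionRing R]

theorem eq_neg_inv_mul_mul_inv_of_mul_mul_add_eq_zero {α β γ x : R} (hα : α ≠ 0) (hβ : β ≠ 0)
    (h : α * x * β + γ = 0) : x = -(α⁻¹ * γ * β⁻¹) := by
  calc x = α⁻¹ * (α * x * β) * β⁻¹ := by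
        rw [mul_assoc, mul_inv_cancel_right₀ hβ, inv_mul_cancel_left₀ hα]
    _ = -(α⁻¹ * γ * β⁻¹) := by rw [eq_neg_of_add_eq_zero_left h, mul_neg, neg_mul]

theorem exists_forall_mul_diagonal_mul_ne_zero [Infinite R] (b c : Matrix ι ι R)
    (P : Finset (ι × ι)) : ∃ d : ι → R, (∀ r, d r ≠ 0) ∧
      ∀ p ∈ P, p ∈ b.supportRel ○ c.supportRel → (b * diagonal d * c) p.1 p.2 ≠ 0 := by
  classical
  induction P using Finset.induction_on with
  | empty => exact ⟨fun _ => 1, fun _ => one_ne_zero, by simp⟩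
  | insert q P _ ih =>
    obtain ⟨d, hd0, hd⟩ := ih
    by_cases hq : q ∈ b.supportRel ○ c.supportRel
    swap
    · refine ⟨d, hd0, fun p hp hpS => ?_⟩
      rcases mem_insert.1 hp with rfl | hp
      exacts [absurd hpS hq, hd p hp hpS]
    obtain ⟨r, hbr, hcr⟩ := hq
    set rest : ι × ι → R := fun p => ∑ s ∈ univ.erase r, b p.1 s * d s * c s p.2
    -- Only `d r` is changed; each entry through `r` is then affine in the new value `x`
    -- and vanishes for at most one `x`.
    obtain ⟨x, hx⟩ := Infinite.exists_notMem_finset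
      (insert 0 ((insert q P).image fun p => -((b p.1 r)⁻¹ * rest p * (c r p.2)⁻¹)))
    refine ⟨Function.update d r x, fun s => ?_, fun p hp hpS => ?_⟩
    · rcases eq_or_ne s r with rfl | hs
      · simpa using (ne_of_mem_of_not_mem (mem_insert_self 0 _) hx).symm
      · simpa [Function.update_of_ne hs] using hd0 s
    rw [mul_diagonal_update_mul_apply]
    by_cases hp0 : b p.1 r = 0 ∨ c r p.2 = 0
    · have hvanish : ∀ y, b p.1 r * y * c r p.2 = 0 := fun y => by rcases hp0 with h | h <;> simp [h]
      have hpP : p ∈ P := by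
        rcases mem_insert.1 hp with rfl | hp
        exacts [absurd hp0 (not_or.2 ⟨hbr, hcr⟩), hp]
      have := hd p hpP hpS
      rw [← Function.update_eq_self r d, mul_diagonal_update_mul_apply, hvanish] at this
      rwa [hvanish]
    · push Not at hp0
      exact fun h => hx (mem_insert_of_mem (mem_image.2
        ⟨p, hp, (eq_neg_inv_mul_mul_inv_of_mul_mul_add_eq_zero hp0.1 hp0.2 h).symm⟩))

theorem exists_supportRel_mul_diagonal_mul_eq [Infinite R] (b c : Matrix ι ι R) :
    ∃ d : ι → R, (∀ r, d r ≠ 0) ∧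
      (b * diagonal d * c).supportRel = b.supportRel ○ c.supportRel := by
  obtain ⟨d, hd0, hd⟩ := exists_forall_mul_diagonal_mul_ne_zero b c univ
  exact ⟨d, hd0, (supportRel_mul_diagonal_mul_subset b c d).antisymm
    fun p hp => hd p (mem_univ p) hp⟩

end DivisionRing

section Ring

variable [Fintype ι] [DecidableEq ι] [Ring R] [StrongRankCondition R]

theorem card_le_card_of_isUnit_of_rows_supported {M : Matrix ι ι R} (hM : IsUnit M)
    (s t : Finset ι) (hst : ∀ j ∈ s, ∀ k ∉ t, M j k = 0) : #s ≤ #t := by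
  let N : Matrix s t R := M.submatrix (↑) (↑)
  have hN : Function.Injective N.vecMul := by
    refine (injective_iff_map_eq_zero N.vecMulLinear).2 fun g hg => ?_
    let x : ι → R := Function.extend Subtype.val g 0
    have hx_out : ∀ j ∉ s, x j = 0 := fun j hj =>
      Function.extend_apply' _ _ _ fun ⟨j', hj'⟩ => hj (hj' ▸ j'.2)
    have hxM : x ᵥ* M = 0 := by
      funext k
      have hsum : (x ᵥ* M) k = ∑ j : s, g j * M j k := by
        rw [vecMul, dotProduct, ← sum_subset (subset_univ s) fun j _ hj => by simp [hx_out j hj],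
          ← sum_coe_sort s]
        simp [x]
      rw [hsum]
      by_cases hk : k ∈ t
      · exact congrFun hg ⟨k, hk⟩
      · exact sum_eq_zero fun j _ => by simp [hst j j.2 k hk]
    funext j
    simpa [x, Subtype.val_injective.extend_apply] using
      congrFun (vecMul_injective_of_isUnit hM (hxM.trans (zero_vecMul M).symm)) j
  simpa using LinearMap.finrank_le_finrank_of_injective (f := N.vecMulLinear) hN

theorem apply_self_ne_zero_of_isUnit_of_isTrans {M : Matrix ι ι R} (hM : IsUnit M)
    (htrans : M.supportRel.IsTrans) (i : ι) : M i i ≠ 0 := by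
  classical
  intro hii
  let t := univ.filter fun k => M i k ≠ 0
  have hi : i ∉ t := by simpa [t] using hii
  have := card_le_card_of_isUnit_of_rows_supported hM (insert i t) t fun j hj k hk => by
    by_contra hjk
    rcases mem_insert.1 hj with rfl | hj
    · exact hk (by simpa [t] using hjk)
    · exact hk (by simpa [t] using htrans.trans i j k (by simpa [t] using hj) hjk)
  simp [card_insert_of_notMem hi] at this

end Ring

end Matrix

section MemSemigroupGen

variable {n : ℕ} {R : Type*} [Ring R] {a b x : (Matrix (Fin n) (Fin n) R)ˣ}

theorem memSemigroupGen_self (a : (Matrix (Fin n) (Fin n) R)ˣ) : MemSemigroupGen a a :=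
  ⟨[a], by simp, by simp, by simp⟩

theorem MemSemigroupGen.mul_right (hb : MemSemigroupGen a b) (hx : x = a ∨ x.val.IsDiag) :
    MemSemigroupGen a (b * x) := by
  obtain ⟨L, hL, haL, rfl⟩ := hb
  refine ⟨L ++ [x], fun y hy => ?_, List.mem_append_left _ haL, by simp⟩
  rcases List.mem_append.1 hy with hy | hy
  exacts [hL y hy, List.eq_of_mem_singleton hy ▸ hx]

end MemSemigroupGen

theorem exists_memSemigroupGen_supportRel_eq_pow {n : ℕ} {T : Type*} [DivisionRing T]
    [Infinite T] (a : (Matrix (Fin n) (Fin n) T)ˣ) {k : ℕ} (hk : 0 < k) :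
    ∃ b, MemSemigroupGen a b ∧ b.val.supportRel = a.val.supportRel.pow k := by
  induction k, hk using Nat.le_induction with
  | base => exact ⟨a, memSemigroupGen_self a, (pow_one _).symm⟩
  | succ k _ ih =>
    obtain ⟨b, hb, hbk⟩ := ih
    obtain ⟨d, hd0, hd⟩ := exists_supportRel_mul_diagonal_mul_eq b.val a.val
    obtain ⟨D, hD⟩ : IsUnit (diagonal d) :=
      (Pi.isUnit_iff.2 fun r => (hd0 r).isUnit).map (diagonalRingHom (Fin n) T)
    refine ⟨b * D * a, (hb.mul_right (.inr (hD ▸ isDiag_diagonal d))).mul_right (.inl rfl), ?_⟩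
    rw [Units.val_mul, Units.val_mul, hD, hd, hbk, pow_succ]

theorem exists_mem_semigroup_good_rows_general
    {n : ℕ} {T : Type*} [DivisionRing T] [Infinite T]
    (a : (Matrix (Fin n) (Fin n) T)ˣ) :
    ∃ b : (Matrix (Fin n) (Fin n) T)ˣ, MemSemigroupGen a b ∧
      (∀ i, b.val i i ≠ 0) ∧
      (∀ i j, b.val i j = 0 → ∀ r, b.val i r * b.val r j = 0) := by
  obtain ⟨k, hk, htrans⟩ := a.val.supportRel.exists_pos_isTrans_pow
  obtain ⟨b, hb, hbk⟩ := exists_memSemigroupGen_supportRel_eq_pow a hk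
  rw [← hbk] at htrans
  refine ⟨b, hb, apply_self_ne_zero_of_isUnit_of_isTrans b.isUnit htrans, fun i j hij r => ?_⟩
  by_contra h
  exact htrans.trans i r j (left_ne_zero_of_mul h) (right_ne_zero_of_mul h) hij

theorem exists_mem_semigroup_good_rows
    {n : ℕ} {T : Type*} [DivisionRing T] [Infinite T] (hn : 2 ≤ n)
    (a : (Matrix (Fin n) (Fin n) T)ˣ) :
    ∃ b : (Matrix (Fin n) (Fin n) T)ˣ, MemSemigroupGen a b ∧
      (∀ i, b.val i i ≠ 0) ∧
      (∀ i j, b.val i j = 0 → ∀ r, b.val i r * b.val r j = 0) :=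
  exists_mem_semigroup_good_rows_general a
end

section
/- If T is an infinite division ring and a ∈ GL(n,T), then ⟨a,D⟩ contains a matrix c such that all diagonal entries of c are nonzero, c_{ij} = 0 implies c_{ir} c_{rj} = 0 for all r, and c_{ij} ≠ 0 implies (c⁻¹)_{ij} ≠ 0. -/
open Matrix

namespace SemigroupGood
variable {T : Type*} [DivisionRing T] [Infinite T] {n : ℕ}

/-- Sequential generic choice of diagonal entries avoiding cancellation,
simultaneously for "linear" constraints and "inverse-linear" constraints. -/
lemma gen_choice {n : ℕ} {ι₁ ι₂ : Type*} [Finite ι₁] [Finite ι₂]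
    (α₁ β₁ : ι₁ → Fin n → T) (α₂ β₂ : ι₂ → Fin n → T) :
    ∀ (s : Finset (Fin n)) (C₁ : ι₁ → T) (C₂ : ι₂ → T),
    (∀ p, C₁ p ≠ 0 ∨ ∃ r ∈ s, α₁ p r ≠ 0 ∧ β₁ p r ≠ 0) →
    (∀ q, C₂ q ≠ 0 ∨ ∃ r ∈ s, α₂ q r ≠ 0 ∧ β₂ q r ≠ 0) →
    ∃ d : Fin n → T, (∀ r, d r ≠ 0) ∧
      (∀ p, C₁ p + ∑ r ∈ s, α₁ p r * d r * β₁ p r ≠ 0) ∧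
      (∀ q, C₂ q + ∑ r ∈ s, α₂ q r * (d r)⁻¹ * β₂ q r ≠ 0) := by
  intro s
  induction s using Finset.induction_on with
  | empty =>
    intro C₁ C₂ h₁ h₂
    refine ⟨fun _ => 1, fun _ => one_ne_zero, ?_, ?_⟩ <;> intro p <;> simp
    · rcases h₁ p with h | ⟨r, hr, _⟩
      · exact h
      · exact absurd hr (by simp)
    · rcases h₂ p with h | ⟨r, hr, _⟩
      · exact h
      · exact absurd hr (by simp)
  | @insert r₀ s hr₀ ih =>
    intro C₁ C₂ h₁ h₂
    set Bad : Set T :=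
      {0} ∪ (⋃ p : ι₁, {t | α₁ p r₀ * t * β₁ p r₀ = -C₁ p ∧ α₁ p r₀ ≠ 0 ∧ β₁ p r₀ ≠ 0})
        ∪ (⋃ q : ι₂, {t | α₂ q r₀ * t⁻¹ * β₂ q r₀ = -C₂ q ∧ α₂ q r₀ ≠ 0 ∧ β₂ q r₀ ≠ 0})
      with hBad
    have hfin : Bad.Finite := by
      refine Set.Finite.union (Set.Finite.union (Set.finite_singleton 0) ?_) ?_
      · refine Set.finite_iUnion fun p => Set.Subsingleton.finite ?_
        rintro t₁ ⟨e₁, ha, hb⟩ t₂ ⟨e₂, -, -⟩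
        have : α₁ p r₀ * t₁ * β₁ p r₀ = α₁ p r₀ * t₂ * β₁ p r₀ := e₁.trans e₂.symm
        exact mul_left_cancel₀ ha (mul_right_cancel₀ hb this)
      · refine Set.finite_iUnion fun q => Set.Subsingleton.finite ?_
        rintro t₁ ⟨e₁, ha, hb⟩ t₂ ⟨e₂, -, -⟩
        have : α₂ q r₀ * t₁⁻¹ * β₂ q r₀ = α₂ q r₀ * t₂⁻¹ * β₂ q r₀ := e₁.trans e₂.symm
        exact inv_injective (mul_left_cancel₀ ha (mul_right_cancel₀ hb this))
    obtain ⟨t, ht⟩ := hfin.infinite_compl.nonempty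
    have ht0 : t ≠ 0 := fun h => ht (by simp [hBad, h])
    have ht1 : ∀ p, α₁ p r₀ ≠ 0 → β₁ p r₀ ≠ 0 → C₁ p + α₁ p r₀ * t * β₁ p r₀ ≠ 0 := by
      intro p ha hb hc
      exact ht <| Or.inl <| Or.inr <| Set.mem_iUnion.2
        ⟨p, (eq_neg_of_add_eq_zero_right hc), ha, hb⟩
    have ht2 : ∀ q, α₂ q r₀ ≠ 0 → β₂ q r₀ ≠ 0 → C₂ q + α₂ q r₀ * t⁻¹ * β₂ q r₀ ≠ 0 := by
      intro q ha hb hc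
      exact ht <| Or.inr <| Set.mem_iUnion.2
        ⟨q, (eq_neg_of_add_eq_zero_right hc), ha, hb⟩
    -- new constants
    obtain ⟨d, hd0, hd1, hd2⟩ := ih (fun p => C₁ p + α₁ p r₀ * t * β₁ p r₀)
      (fun q => C₂ q + α₂ q r₀ * t⁻¹ * β₂ q r₀)
      (by
        intro p
        by_cases hne : α₁ p r₀ ≠ 0 ∧ β₁ p r₀ ≠ 0
        · exact Or.inl (ht1 p hne.1 hne.2)
        · have hterm : α₁ p r₀ * t * β₁ p r₀ = 0 := by
            rcases not_and_or.1 hne with h | h <;>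
              simp [not_not.1 h]
          rcases h₁ p with h | ⟨r, hr, hab⟩
          · exact Or.inl (by simpa [hterm] using h)
          · rcases Finset.mem_insert.1 hr with rfl | hrs
            · exact absurd hab hne
            · exact Or.inr ⟨r, hrs, hab⟩)
      (by
        intro q
        by_cases hne : α₂ q r₀ ≠ 0 ∧ β₂ q r₀ ≠ 0
        · exact Or.inl (ht2 q hne.1 hne.2)
        · have hterm : α₂ q r₀ * t⁻¹ * β₂ q r₀ = 0 := by
            rcases not_and_or.1 hne with h | h <;>
              simp [not_not.1 h]
          rcases h₂ q with h | ⟨r, hr, hab⟩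
          · exact Or.inl (by simpa [hterm] using h)
          · rcases Finset.mem_insert.1 hr with rfl | hrs
            · exact absurd hab hne
            · exact Or.inr ⟨r, hrs, hab⟩)
    refine ⟨Function.update d r₀ t, ?_, ?_, ?_⟩
    · intro r
      rcases eq_or_ne r r₀ with rfl | h
      · simpa using ht0
      · simpa [Function.update_of_ne h] using hd0 r
    · intro p
      rw [Finset.sum_insert hr₀, Function.update_self,
        Finset.sum_congr rfl (fun r hr =>
          by rw [Function.update_of_ne (by rintro rfl; exact hr₀ hr)]),
        ← add_assoc]
      exact hd1 p
    · intro q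
      rw [Finset.sum_insert hr₀, Function.update_self,
        Finset.sum_congr rfl (fun r hr =>
          by rw [Function.update_of_ne (by rintro rfl; exact hr₀ hr)]),
        ← add_assoc]
      exact hd2 q
/-- build a diagonal unit from a nowhere-zero vector -/
def diagUnit {T : Type*} [DivisionRing T] {n : ℕ} (w : Fin n → T) (hw : ∀ r, w r ≠ 0) :
    (Matrix (Fin n) (Fin n) T)ˣ where
  val := Matrix.diagonal w
  inv := Matrix.diagonal (fun r => (w r)⁻¹)
  val_inv := by
    rw [Matrix.diagonal_mul_diagonal]
    have : (fun i => w i * (w i)⁻¹) = fun _ => (1 : T) :=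
      funext fun r => mul_inv_cancel₀ (hw r)
    rw [this, Matrix.diagonal_one]
  inv_val := by
    rw [Matrix.diagonal_mul_diagonal]
    have : (fun i => (w i)⁻¹ * w i) = fun _ => (1 : T) :=
      funext fun r => inv_mul_cancel₀ (hw r)
    rw [this, Matrix.diagonal_one]

lemma step (u v : (Matrix (Fin n) (Fin n) T)ˣ) :
    ∃ d : (Matrix (Fin n) (Fin n) T)ˣ, d.val.IsDiag ∧
      (∀ i j, (u * d * v).val i j ≠ 0 ↔ ∃ r, u.val i r ≠ 0 ∧ v.val r j ≠ 0) ∧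
      (∀ i j, ((u * d * v)⁻¹).val i j ≠ 0 ↔
        ∃ r, (v⁻¹).val i r ≠ 0 ∧ (u⁻¹).val r j ≠ 0) := by
  classical
  set ι₁ := {ij : Fin n × Fin n // ∃ r, u.val ij.1 r ≠ 0 ∧ v.val r ij.2 ≠ 0}
  set ι₂ := {ij : Fin n × Fin n // ∃ r, (v⁻¹).val ij.1 r ≠ 0 ∧ (u⁻¹).val r ij.2 ≠ 0}
  obtain ⟨w, hw0, hw1, hw2⟩ := gen_choice (T := T)
    (fun (p : ι₁) r => u.val p.1.1 r) (fun p r => v.val r p.1.2)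
    (fun (q : ι₂) r => (v⁻¹).val q.1.1 r) (fun q r => (u⁻¹).val r q.1.2)
    Finset.univ (fun _ => 0) (fun _ => 0)
    (fun p => Or.inr (by obtain ⟨r, h⟩ := p.2; exact ⟨r, Finset.mem_univ r, h⟩))
    (fun q => Or.inr (by obtain ⟨r, h⟩ := q.2; exact ⟨r, Finset.mem_univ r, h⟩))
  refine ⟨diagUnit w hw0, Matrix.isDiag_diagonal w, ?_, ?_⟩
  · intro i j
    have hentry : (u * diagUnit w hw0 * v).val i j
        = ∑ r, u.val i r * w r * v.val r j := by
      show (u.val * (diagUnit w hw0).val * v.val) i j = _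
      rw [Matrix.mul_apply]
      refine Finset.sum_congr rfl fun r _ => ?_
      show (u.val * Matrix.diagonal w) i r * v.val r j = _
      rw [Matrix.mul_diagonal]
    rw [hentry]
    constructor
    · intro h
      by_contra hc
      push_neg at hc
      refine h (Finset.sum_eq_zero fun r _ => ?_)
      by_cases h' : u.val i r = 0
      · rw [h', zero_mul, zero_mul]
      · rw [hc r h', mul_zero]
    · rintro ⟨r, hr⟩
      have := hw1 ⟨(i, j), ⟨r, hr⟩⟩
      rw [zero_add] at this
      exact this
  · intro i j
    have hinv : ((u * diagUnit w hw0 * v)⁻¹).val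
        = (v⁻¹).val * (Matrix.diagonal fun r => (w r)⁻¹) * (u⁻¹).val := by
      rw [_root_.mul_inv_rev, _root_.mul_inv_rev]
      rw [Units.val_mul, Units.val_mul, ← mul_assoc]
      rfl
    have hentry : ((u * diagUnit w hw0 * v)⁻¹).val i j
        = ∑ r, (v⁻¹).val i r * (w r)⁻¹ * (u⁻¹).val r j := by
      rw [hinv, Matrix.mul_apply]
      refine Finset.sum_congr rfl fun r _ => ?_
      rw [Matrix.mul_diagonal]
    rw [hentry]
    constructor
    · intro h
      by_contra hc
      push_neg at hc
      refine h (Finset.sum_eq_zero fun r _ => ?_)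
      by_cases h' : (v⁻¹).val i r = 0
      · rw [h', zero_mul, zero_mul]
      · rw [hc r h', mul_zero]
    · rintro ⟨r, hr⟩
      have := hw2 ⟨(i, j), ⟨r, hr⟩⟩
      rw [zero_add] at this
      exact this
variable {n : ℕ}

/-- composition of relations on `Fin n` -/
def Comp (R S : Fin n → Fin n → Prop) : Fin n → Fin n → Prop :=
  fun i j => ∃ r, R i r ∧ S r j

/-- powers of a relation -/
def Pow (R : Fin n → Fin n → Prop) : ℕ → (Fin n → Fin n → Prop)
  | 0 => fun i j => i = j
  | k + 1 => Comp (Pow R k) R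

lemma comp_assoc (R S U : Fin n → Fin n → Prop) :
    Comp (Comp R S) U = Comp R (Comp S U) := by
  funext i j
  simp only [Comp]
  apply propext
  constructor
  · rintro ⟨r, ⟨s, hrs, hsr⟩, hu⟩; exact ⟨s, hrs, r, hsr, hu⟩
  · rintro ⟨s, hrs, r, hsr, hu⟩; exact ⟨r, ⟨s, hrs, hsr⟩, hu⟩

lemma comp_id (R : Fin n → Fin n → Prop) : Comp R (fun i j => i = j) = R := by
  funext i j
  simp only [Comp]
  apply propext
  constructor
  · rintro ⟨r, h, rfl⟩; exact h
  · intro h; exact ⟨j, h, rfl⟩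

lemma id_comp (R : Fin n → Fin n → Prop) : Comp (fun i j => i = j) R = R := by
  funext i j
  simp only [Comp]
  apply propext
  constructor
  · rintro ⟨r, rfl, h⟩; exact h
  · intro h; exact ⟨i, rfl, h⟩

lemma pow_add (R : Fin n → Fin n → Prop) (a b : ℕ) :
    Pow R (a + b) = Comp (Pow R a) (Pow R b) := by
  induction b with
  | zero => rw [Nat.add_zero, Pow, comp_id]
  | succ b ih => rw [← Nat.add_assoc, Pow, Pow, ih, comp_assoc]

lemma pow_one (R : Fin n → Fin n → Prop) : Pow R 1 = R := by
  rw [Pow, Pow, id_comp]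

lemma comp_pow (R : Fin n → Fin n → Prop) (k : ℕ) :
    Comp R (Pow R k) = Pow R (k + 1) := by
  rw [Nat.add_comm k 1, pow_add, pow_one]

/-- an idempotent power exists -/
lemma exists_idem_pow (R : Fin n → Fin n → Prop) :
    ∃ m, 1 ≤ m ∧ Comp (Pow R m) (Pow R m) = Pow R m ∧
      ∀ t, 1 ≤ t → Pow R (m * t) = Pow R m := by
  obtain ⟨x, y, hxy, hfe⟩ := Finite.exists_ne_map_eq_of_infinite
    (fun k : ℕ => Pow R (k + 1))
  wlog hlt : x < y generalizing x y
  · exact this y x hxy.symm hfe.symm (by omega)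
  set k := x + 1 with hk
  set p := y - x with hp
  have hp1 : 1 ≤ p := by omega
  have hkp : Pow R k = Pow R (k + p) := by
    have : y + 1 = k + p := by omega
    rw [hfe, this]
  -- stability
  have stab : ∀ u, Pow R (k + u + p) = Pow R (k + u) := by
    intro u
    have e : k + u + p = (k + p) + u := by omega
    rw [e, pow_add, ← hkp, ← pow_add]
  have stab' : ∀ u t, Pow R (k + u + t * p) = Pow R (k + u) := by
    intro u t
    induction t with
    | zero => simp
    | succ t ih =>
      rw [show k + u + (t + 1) * p = k + (u + t * p) + p by ring, stab (u + t * p),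
        show k + (u + t * p) = k + u + t * p by ring, ih]
  set m := k * p with hm
  have hmk : k ≤ m := Nat.le_mul_of_pos_right k hp1
  have key : ∀ t, Pow R (m + t * p) = Pow R m := by
    intro t
    have h := stab' (m - k) t
    rw [show k + (m - k) = m by omega] at h
    exact h
  have idem : Comp (Pow R m) (Pow R m) = Pow R m := by
    rw [← pow_add, show m + m = m + k * p from by rw [hm], key k]
  refine ⟨m, by omega, idem, ?_⟩
  intro t ht
  obtain ⟨t', rfl⟩ : ∃ t', t = 1 + t' := ⟨t - 1, by omega⟩
  rw [Nat.mul_add, Nat.mul_one, hm]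
  rw [show k * p + k * p * t' = m + (k * t') * p by rw [hm]; ring]
  exact key (k * t')

lemma rows_linearIndependent (c : (Matrix (Fin n) (Fin n) T)ˣ) :
    LinearIndependent T (fun j : Fin n => c.val j) := by
  rw [Fintype.linearIndependent_iff]
  intro g hg
  have hvm : g ᵥ* c.val = 0 := by
    funext k
    have : (g ᵥ* c.val) k = ∑ j, g j * c.val j k := by
      simp [Matrix.vecMul, dotProduct]
    rw [this]
    calc ∑ j, g j * c.val j k = (∑ j, g j • c.val j) k := by
          rw [Finset.sum_apply]
          exact Finset.sum_congr rfl fun j _ => rfl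
      _ = 0 := by rw [hg]; rfl
  have : g = 0 := by
    calc g = g ᵥ* (1 : Matrix (Fin n) (Fin n) T) := (Matrix.vecMul_one g).symm
      _ = g ᵥ* (c.val * (c⁻¹).val) := by rw [Units.mul_inv]
      _ = (g ᵥ* c.val) ᵥ* (c⁻¹).val := (Matrix.vecMul_vecMul g c.val (c⁻¹).val).symm
      _ = 0 := by rw [hvm, Matrix.zero_vecMul]
  intro i; rw [this]; rfl

/-- the support of an invertible matrix, if idempotent as a relation, is reflexive -/
lemma refl_of_idem (c : (Matrix (Fin n) (Fin n) T)ˣ) (Q : Fin n → Fin n → Prop)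
    (hsupp : ∀ i j, c.val i j ≠ 0 ↔ Q i j) (hidem : Comp Q Q = Q) (i : Fin n) : Q i i := by
  classical
  by_contra hQ
  have htrans : ∀ {x y z}, Q x y → Q y z → Q x z := by
    intro x y z h1 h2
    rw [← hidem]; exact ⟨y, h1, h2⟩
  set A : Finset (Fin n) := Finset.univ.filter (fun j => Q i j) with hA
  have hiA : i ∉ A := by simp [hA, hQ]
  set B : Finset (Fin n) := insert i A with hB
  -- rows indexed by B vanish outside A
  have hvanish : ∀ b ∈ B, ∀ k, k ∉ A → c.val b k = 0 := by
    intro b hb k hk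
    by_contra hne
    have hQbk : Q b k := (hsupp b k).1 hne
    rcases Finset.mem_insert.1 hb with rfl | hbA
    · exact hk (by simp [hA, hQbk])
    · have hQib : Q i b := by simpa [hA] using hbA
      exact hk (by simp [hA, htrans hQib hQbk])
  -- restricted rows are linearly independent in (A → T)
  have hliB : LinearIndependent T (fun b : B => c.val b.val) :=
    (rows_linearIndependent c).comp Subtype.val Subtype.val_injective
  set π : (Fin n → T) →ₗ[T] (↥A → T) := LinearMap.funLeft T T Subtype.val with hπ
  have hliU : LinearIndependent T (fun b : B => π (c.val b.val)) := by
    rw [Fintype.linearIndependent_iff]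
    intro g hg
    have hw : (∑ b : B, g b • c.val b.val) = 0 := by
      funext k
      by_cases hk : k ∈ A
      · have := congrFun hg ⟨k, hk⟩
        rw [Finset.sum_apply]
        calc ∑ b : B, (g b • c.val b.val) k
            = ∑ b : B, (g b • π (c.val b.val)) ⟨k, hk⟩ := rfl
          _ = (∑ b : B, g b • π (c.val b.val)) ⟨k, hk⟩ := (Finset.sum_apply _ _ _).symm
          _ = 0 := this
      · rw [Finset.sum_apply]
        refine Finset.sum_eq_zero fun b _ => ?_
        have := hvanish b.val b.2 k hk
        show g b • c.val b.val k = 0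
        rw [this, smul_zero]
    exact Fintype.linearIndependent_iff.1 hliB g hw
  have hcard := hliU.fintype_card_le_finrank
  rw [Module.finrank_pi, Fintype.card_coe, Fintype.card_coe, hB,
    Finset.card_insert_of_notMem hiA] at hcard
  omega

/-- incidence algebra: inverse stays supported on a reflexive transitive support -/
lemma inv_supp_subset (c : (Matrix (Fin n) (Fin n) T)ˣ) (Q : Fin n → Fin n → Prop)
    (hrefl : ∀ i, Q i i) (htrans : ∀ i j k, Q i j → Q j k → Q i k)
    (hsub : ∀ i j, c.val i j ≠ 0 → Q i j) :
    ∀ i j, (c⁻¹).val i j ≠ 0 → Q i j := by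
  classical
  set S : Submodule T (Matrix (Fin n) (Fin n) T) :=
    { carrier := {m | ∀ i j, ¬ Q i j → m i j = 0}
      add_mem' := by
        intro x y hx hy i j h
        show x i j + y i j = 0
        rw [hx i j h, hy i j h, add_zero]
      zero_mem' := fun i j _ => rfl
      smul_mem' := by
        intro t x hx i j h
        show (t • x) i j = 0
        rw [Matrix.smul_apply, hx i j h, smul_zero] } with hS
  have hmulmem : ∀ x : Matrix (Fin n) (Fin n) T, x ∈ S → x * c.val ∈ S := by
    intro x hx i j h
    show ∑ r, x i r * c.val r j = 0
    refine Finset.sum_eq_zero fun r _ => ?_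
    by_cases hxr : x i r = 0
    · rw [hxr, zero_mul]
    · by_cases hcr : c.val r j = 0
      · rw [hcr, mul_zero]
      · have hQir : Q i r := by
          by_contra hq
          exact hxr (hx i r hq)
        exact absurd (htrans i r j hQir (hsub r j hcr)) h
  have hone : (1 : Matrix (Fin n) (Fin n) T) ∈ S := by
    intro i j h
    have hne : i ≠ j := fun e => h (e ▸ hrefl i)
    exact Matrix.one_apply_ne hne
  have hcS : c.val ∈ S := fun i j h => by
    by_contra hne
    exact h (hsub i j hne)
  set f : S →ₗ[T] S :=
    { toFun := fun x => ⟨x.val * c.val, hmulmem x.val x.2⟩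
      map_add' := by
        intro x y
        apply Subtype.ext
        show (x.val + y.val) * c.val = x.val * c.val + y.val * c.val
        rw [add_mul]
      map_smul' := by
        intro t x
        apply Subtype.ext
        show (t • x.val) * c.val = t • (x.val * c.val)
        rw [Matrix.smul_mul] } with hf
  have hinj : Function.Injective f := by
    intro x y hxy
    have h1 : x.val * c.val = y.val * c.val := congrArg Subtype.val hxy
    apply Subtype.ext
    calc x.val = x.val * c.val * (c⁻¹).val := by
          rw [mul_assoc, Units.mul_inv, mul_one]
      _ = y.val * c.val * (c⁻¹).val := by rw [h1]
      _ = y.val := by rw [mul_assoc, Units.mul_inv, mul_one]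
  have hsurj : Function.Surjective f := (LinearMap.injective_iff_surjective).1 hinj
  obtain ⟨x, hx⟩ := hsurj ⟨1, hone⟩
  have hx1 : x.val * c.val = 1 := congrArg Subtype.val hx
  have hxinv : (c⁻¹).val = x.val := by
    calc (c⁻¹).val = 1 * (c⁻¹).val := (one_mul _).symm
      _ = x.val * c.val * (c⁻¹).val := by rw [hx1]
      _ = x.val := by rw [mul_assoc, Units.mul_inv, mul_one]
  intro i j hne
  by_contra hq
  rw [hxinv] at hne
  exact hne (x.2 i j hq)

end SemigroupGood

namespace SemigroupGood
variable {T : Type*} [DivisionRing T] [Infinite T] {n : ℕ}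

lemma chain (a : (Matrix (Fin n) (Fin n) T)ˣ) :
    ∀ m, 1 ≤ m → ∃ c : (Matrix (Fin n) (Fin n) T)ˣ, MemSemigroupGen a c ∧
      (∀ i j, c.val i j ≠ 0 ↔ Pow (fun x y => a.val x y ≠ 0) m i j) ∧
      (∀ i j, (c⁻¹).val i j ≠ 0 ↔ Pow (fun x y => (a⁻¹).val x y ≠ 0) m i j) := by
  intro m hm
  induction m, hm using Nat.le_induction with
  | base =>
    refine ⟨a, ⟨[a], by simp, by simp, by simp⟩, ?_, ?_⟩
    · intro i j; rw [pow_one]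
    · intro i j; rw [pow_one]
  | succ m hm ih =>
    obtain ⟨c, ⟨L, hL1, hL2, hL3⟩, hc1, hc2⟩ := ih
    obtain ⟨d, hdiag, hd1, hd2⟩ := step c a
    refine ⟨c * d * a, ⟨L ++ [d, a], ?_, ?_, ?_⟩, ?_, ?_⟩
    · intro x hx
      rcases List.mem_append.1 hx with h | h
      · exact hL1 x h
      · rcases List.mem_cons.1 h with rfl | h
        · exact Or.inr hdiag
        · simp only [List.mem_singleton] at h
          exact Or.inl h
    · exact List.mem_append.2 (Or.inl hL2)
    · rw [List.prod_append, hL3]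
      simp [mul_assoc]
    · intro i j
      rw [hd1 i j]
      show _ ↔ Pow _ (m + 1) i j
      rw [Pow]
      constructor
      · rintro ⟨r, h1, h2⟩; exact ⟨r, (hc1 i r).1 h1, h2⟩
      · rintro ⟨r, h1, h2⟩; exact ⟨r, (hc1 i r).2 h1, h2⟩
    · intro i j
      rw [hd2 i j]
      show _ ↔ Pow _ (m + 1) i j
      rw [← comp_pow]
      constructor
      · rintro ⟨r, h1, h2⟩; exact ⟨r, h1, (hc2 r j).1 h2⟩
      · rintro ⟨r, h1, h2⟩; exact ⟨r, h1, (hc2 r j).2 h2⟩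

end SemigroupGood

open SemigroupGood in
theorem exists_mem_semigroup_good_rows_and_inverse
    {n : ℕ} {T : Type*} [DivisionRing T] [Infinite T] (hn : 2 ≤ n)
    (a : (Matrix (Fin n) (Fin n) T)ˣ) :
    ∃ c : (Matrix (Fin n) (Fin n) T)ˣ, MemSemigroupGen a c ∧
      (∀ i, c.val i i ≠ 0) ∧
      (∀ i j, c.val i j = 0 → ∀ r, c.val i r * c.val r j = 0) ∧
      (∀ i j, c.val i j ≠ 0 → (c⁻¹).val i j ≠ 0) := by
  classical
  set P : Fin n → Fin n → Prop := fun x y => a.val x y ≠ 0 with hP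
  set P' : Fin n → Fin n → Prop := fun x y => (a⁻¹).val x y ≠ 0 with hP'
  obtain ⟨m₁, hm₁, hidem₁, hpow₁⟩ := exists_idem_pow P
  obtain ⟨m₂, hm₂, hidem₂, hpow₂⟩ := exists_idem_pow P'
  set m := m₁ * m₂ with hm
  have hm1 : 1 ≤ m := Nat.one_le_iff_ne_zero.2 (by positivity)
  obtain ⟨c, hmem, hc1, hc2⟩ := chain a m hm1
  set Q := Pow P m with hQ
  set M := Pow P' m with hM
  have hQidem : Comp Q Q = Q := by
    rw [hQ, hm, hpow₁ m₂ hm₂, hidem₁]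
  have hMidem : Comp M M = M := by
    rw [hM, hm, Nat.mul_comm, hpow₂ m₁ hm₁, hidem₂]
  have hQrefl : ∀ i, Q i i := fun i => refl_of_idem c Q hc1 hQidem i
  have hMrefl : ∀ i, M i i := fun i => refl_of_idem c⁻¹ M hc2 hMidem i
  have hQtrans : ∀ i j k, Q i j → Q j k → Q i k := by
    intro i j k h1 h2
    rw [← hQidem]; exact ⟨j, h1, h2⟩
  have hMtrans : ∀ i j k, M i j → M j k → M i k := by
    intro i j k h1 h2
    rw [← hMidem]; exact ⟨j, h1, h2⟩
  have hQM : ∀ i j, c.val i j ≠ 0 → M i j := by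
    have h := inv_supp_subset c⁻¹ M hMrefl hMtrans (fun i j h => (hc2 i j).1 h)
    rw [inv_inv] at h
    exact h
  refine ⟨c, hmem, ?_, ?_, ?_⟩
  · intro i
    exact (hc1 i i).2 (hQrefl i)
  · intro i j hzero r
    by_contra hne
    have h1 : c.val i r ≠ 0 := fun h => hne (by rw [h, zero_mul])
    have h2 : c.val r j ≠ 0 := fun h => hne (by rw [h, mul_zero])
    exact ((hc1 i j).2 (hQtrans i r j ((hc1 i r).1 h1) ((hc1 r j).1 h2))) hzero
  · intro i j hne
    exact (hc2 i j).2 (hQM i j hne)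
end

section
/- Let T be a division ring, a ∈ GL(n,T), and suppose the rows of a from 1 to l-1 coincide with the corresponding rows of the identity matrix, a satisfies: all diagonal entries nonzero, a_{ij}=0 implies a_{ir}a_{rj}=0 for all r, and a_{ij}≠0 implies (a⁻¹)_{ij}≠0. Then there exists an invertible diagonal matrix d such that (ada)_{lj} = 0 for all j ≠ l. -/
open Matrix

theorem key_inv_zero
    {n : ℕ} {T : Type*} [DivisionRing T]
    (a : (Matrix (Fin n) (Fin n) T)ˣ) (l : Fin n)
    (hdiag : ∀ i, a.val i i ≠ 0)
    (hgood : ∀ i j, a.val i j = 0 → ∀ r, a.val i r * a.val r j = 0) :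
    ∀ r, a.val l r = 0 → (a⁻¹).val l r = 0 := by
  classical
  set S : Set (Fin n) := {s | a.val l s ≠ 0} with hS
  -- fact 1 : s ∈ S, t ∉ S → a s t = 0
  have fact1 : ∀ s ∈ S, ∀ t ∉ S, a.val s t = 0 := by
    intro s hs t ht
    have h0 : a.val l t = 0 := not_not.mp ht
    have := hgood l t h0 s
    rcases mul_eq_zero.mp this with h | h
    · exact absurd h hs
    · exact h
  -- linear equivalence given by vecMul with a
  let e : ((Fin n) → T) ≃ₗ[T] ((Fin n) → T) :=
    LinearEquiv.ofLinear (a.val.vecMulLinear) ((a⁻¹).val.vecMulLinear)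
      (LinearMap.ext fun v => by
        show (v ᵥ* (a⁻¹).val) ᵥ* a.val = v
        rw [Matrix.vecMul_vecMul, ← Units.val_mul, inv_mul_cancel a, Units.val_one,
          Matrix.vecMul_one])
      (LinearMap.ext fun v => by
        show (v ᵥ* a.val) ᵥ* (a⁻¹).val = v
        rw [Matrix.vecMul_vecMul, ← Units.val_mul, mul_inv_cancel a, Units.val_one,
          Matrix.vecMul_one])
  -- the coordinate subspace
  let W : Submodule T ((Fin n) → T) := Submodule.pi Sᶜ (fun _ => ⊥)
  have memW : ∀ v : (Fin n) → T, v ∈ W ↔ ∀ t ∉ S, v t = 0 := by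
    intro v
    constructor
    · intro hv t ht
      simpa using hv t ht
    · intro hv t ht
      simpa using hv t ht
  have hmaple : W.map (e : ((Fin n) → T) →ₗ[T] ((Fin n) → T)) ≤ W := by
    rintro v ⟨w, hw, rfl⟩
    rw [memW]
    intro t ht
    show (w ᵥ* a.val) t = 0
    rw [Matrix.vecMul, dotProduct]
    apply Finset.sum_eq_zero
    intro s _
    by_cases hs : s ∈ S
    · rw [fact1 s hs t ht, mul_zero]
    · rw [(memW w).mp hw s hs, zero_mul]
  have hfr : Module.finrank T (W.map (e : ((Fin n) → T) →ₗ[T] ((Fin n) → T)))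
      = Module.finrank T W := LinearEquiv.finrank_map_eq e W
  have hWeq : W.map (e : ((Fin n) → T) →ₗ[T] ((Fin n) → T)) = W :=
    Submodule.eq_of_le_of_finrank_le hmaple hfr.ge
  -- Pi.single l 1 ∈ W
  have hl : l ∈ S := hdiag l
  have hsingle : (Pi.single l 1 : (Fin n) → T) ∈ W := by
    rw [memW]
    intro t ht
    exact Pi.single_eq_of_ne (by rintro rfl; exact ht hl) 1
  -- the image of row l of a⁻¹ under e is Pi.single l 1
  have hrow : e ((a⁻¹).val l) = Pi.single l 1 := by
    show ((a⁻¹).val l) ᵥ* a.val = Pi.single l 1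
    funext j
    rw [Matrix.vecMul, dotProduct]
    have : ((a⁻¹).val * a.val) l j = (1 : Matrix (Fin n) (Fin n) T) l j := by
      rw [← Units.val_mul, inv_mul_cancel a, Units.val_one]
    rw [Matrix.mul_apply] at this
    rw [this, Matrix.one_apply, Pi.single_apply]
    simp [eq_comm]
  -- conclude
  have : (a⁻¹).val l ∈ W := by
    rw [← hWeq] at hsingle
    obtain ⟨w, hw, hew⟩ := hsingle
    have : w = (a⁻¹).val l := e.injective (by rw [hrow]; exact hew)
    rwa [← this]
  intro r hr
  exact (memW _).mp this r (fun h => h hr)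

theorem exists_diag_clearing_row
    {n : ℕ} {T : Type*} [DivisionRing T] [Infinite T] (hn : 2 ≤ n)
    (a : (Matrix (Fin n) (Fin n) T)ˣ) (l : Fin n)
    (hrows : ∀ i j : Fin n, i < l → a.val i j = (1 : Matrix (Fin n) (Fin n) T) i j)
    (hdiag : ∀ i, a.val i i ≠ 0)
    (hgood : ∀ i j, a.val i j = 0 → ∀ r, a.val i r * a.val r j = 0)
    (hinv : ∀ i j, a.val i j ≠ 0 → (a⁻¹).val i j ≠ 0) :
    ∃ d : (Matrix (Fin n) (Fin n) T)ˣ, (d.val).IsDiag ∧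
      ∀ j : Fin n, j ≠ l → (a * d * a).val l j = 0 := by
  classical
  set f : Fin n → T := fun r => if a.val l r = 0 then 1 else (a.val l r)⁻¹ * (a⁻¹).val l r
    with hf
  have hfne : ∀ r, f r ≠ 0 := by
    intro r
    rw [hf]
    by_cases h : a.val l r = 0
    · simp [h]
    · simp only [h, if_false]
      exact mul_ne_zero (inv_ne_zero h) (hinv l r h)
  refine ⟨⟨Matrix.diagonal f, Matrix.diagonal (fun r => (f r)⁻¹), ?_, ?_⟩,
    Matrix.isDiag_diagonal f, ?_⟩
  · rw [Matrix.diagonal_mul_diagonal]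
    convert Matrix.diagonal_one using 2
    funext r
    exact mul_inv_cancel₀ (hfne r)
  · rw [Matrix.diagonal_mul_diagonal]
    convert Matrix.diagonal_one using 2
    funext r
    exact inv_mul_cancel₀ (hfne r)
  · intro j hj
    show (a.val * Matrix.diagonal f * a.val) l j = 0
    have hterm : ∀ r, (a.val * Matrix.diagonal f) l r * a.val r j
        = (a⁻¹).val l r * a.val r j := by
      intro r
      rw [Matrix.mul_diagonal]
      by_cases h : a.val l r = 0
      · rw [h, key_inv_zero a l hdiag hgood r h, zero_mul, zero_mul]
      · rw [hf]
        simp only [h, if_false]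
        rw [← mul_assoc (a.val l r), mul_inv_cancel₀ h, one_mul]
    rw [Matrix.mul_apply]
    calc ∑ r, (a.val * Matrix.diagonal f) l r * a.val r j
        = ∑ r, (a⁻¹).val l r * a.val r j := Finset.sum_congr rfl (fun r _ => hterm r)
      _ = ((a⁻¹).val * a.val) l j := (Matrix.mul_apply).symm
      _ = (1 : Matrix (Fin n) (Fin n) T) l j := by
          rw [← Units.val_mul, inv_mul_cancel a, Units.val_one]
      _ = 0 := Matrix.one_apply_ne (Ne.symm hj)
end

section
/- Let R be an Artinian ring with Jacobson radical J, and let a ∈ GL(n,R) be congruent to the identity modulo J with rows 1 through l-1 equal to the corresponding rows of the identity. Then there exists an invertible diagonal matrix d such that (ada)_{lj} ∈ J² for every j ≠ l. -/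
theorem exists_diag_clearing_row_mod_radical_sq
    {n : ℕ} {R : Type*} [Ring R] [IsArtinianRing R] (hn : 2 ≤ n)
    (J : Ideal R) (hJ : J = Ideal.jacobson (⊥ : Ideal R))
    (Jsq : Ideal R) (hJsq : Jsq = Ideal.span {x : R | ∃ y ∈ J, ∃ z ∈ J, x = y * z})
    (a : (Matrix (Fin n) (Fin n) R)ˣ)
    (ha : ∀ i j : Fin n, a.val i j - (1 : Matrix (Fin n) (Fin n) R) i j ∈ J)
    (l : Fin n)
    (hrows : ∀ i j : Fin n, i < l → a.val i j = (1 : Matrix (Fin n) (Fin n) R) i j) :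
    ∃ d : (Matrix (Fin n) (Fin n) R)ˣ, (d.val).IsDiag ∧
      ∀ j : Fin n, j ≠ l → (a * d * a).val l j ∈ Jsq := by
  classical
  set f : Fin n → R := fun p => if p = l then 1 else -1 with hf
  have hff : ∀ p, f p * f p = 1 := by
    intro p; by_cases h : p = l <;> simp [hf, h]
  have hD : Matrix.diagonal f * Matrix.diagonal f = 1 := by
    rw [Matrix.diagonal_mul_diagonal]
    have : (fun p => f p * f p) = fun _ => (1 : R) := funext hff
    rw [this, Matrix.diagonal_one]
  refine ⟨⟨Matrix.diagonal f, Matrix.diagonal f, hD, hD⟩, Matrix.isDiag_diagonal f, ?_⟩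
  intro j hj
  have hmem : ∀ y ∈ J, ∀ z ∈ J, y * z ∈ Jsq := by
    intro y hy z hz
    rw [hJsq]
    exact Ideal.subset_span ⟨y, hy, z, hz, rfl⟩
  show (a.val * Matrix.diagonal f * a.val) l j ∈ Jsq
  rw [Matrix.mul_apply]
  simp_rw [Matrix.mul_diagonal]
  have hsum : (∑ p, a.val l p * f p * a.val p j)
      = ∑ p, (a.val l p - (1 : Matrix (Fin n) (Fin n) R) l p) * f p
          * (a.val p j - (1 : Matrix (Fin n) (Fin n) R) p j) := by
    rw [eq_comm, ← sub_eq_zero, ← Finset.sum_sub_distrib]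
    have : ∀ p, (a.val l p - (1 : Matrix (Fin n) (Fin n) R) l p) * f p
          * (a.val p j - (1 : Matrix (Fin n) (Fin n) R) p j)
          - a.val l p * f p * a.val p j
        = (1 : Matrix (Fin n) (Fin n) R) l p * (f p
            * (1 : Matrix (Fin n) (Fin n) R) p j)
          - (1 : Matrix (Fin n) (Fin n) R) l p * (f p * a.val p j)
          - a.val l p * f p * (1 : Matrix (Fin n) (Fin n) R) p j := by
      intro p; noncomm_ring
    simp_rw [this]
    rw [Finset.sum_sub_distrib, Finset.sum_sub_distrib]
    simp only [Matrix.one_apply, ite_mul, one_mul, zero_mul, mul_ite, mul_one, mul_zero,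
      Finset.sum_ite_eq, Finset.sum_ite_eq', Finset.mem_univ, if_true]
    simp [hf, hj, Ne.symm hj]
  rw [hsum]
  refine Ideal.sum_mem _ ?_
  intro p _
  by_cases h : p = l
  · have : f p = 1 := by simp [hf, h]
    rw [this, mul_one]
    exact hmem _ (hJ ▸ ha l p) _ (hJ ▸ ha p j)
  · have : f p = -1 := by simp [hf, h]
    rw [this, mul_neg_one, neg_mul]
    exact Jsq.neg_mem (hmem _ (hJ ▸ ha l p) _ (hJ ▸ ha p j))
end

section
/- The semigroup generated by a fixed matrix a ∈ SL(2,ℝ) together with SD(2,ℝ) (diagonal matrices of determinant 1), consisting of products with at least one factor equal to a, need not contain the identity matrix: exhibit a ∈ SL(2,ℝ) such that the identity matrix is not in ⟨a, SD(2,ℝ)⟩. -/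
/-- Membership in the semigroup `⟨a, SD(2,ℝ)⟩` inside `SL(2,ℝ)`: products of
elements of `{a} ∪ SD(2,ℝ)` with at least one factor equal to `a`. -/
def MemSLSemigroupGen (a b : Matrix.SpecialLinearGroup (Fin 2) ℝ) : Prop :=
  ∃ L : List (Matrix.SpecialLinearGroup (Fin 2) ℝ),
    (∀ x ∈ L, x = a ∨ (x : Matrix (Fin 2) (Fin 2) ℝ).IsDiag) ∧ a ∈ L ∧ L.prod = b

abbrev SL2 := Matrix.SpecialLinearGroup (Fin 2) ℝ

def a0 : SL2 := ⟨!![2,1;1,1], by norm_num [Matrix.det_fin_two_of]⟩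

def PosSign (M : Matrix (Fin 2) (Fin 2) ℝ) : Prop := ∀ i j k l, 0 < M i j * M k l

lemma fin2_cases (m : Fin 2) : m = 0 ∨ m = 1 := by omega

lemma posSign_a0 : PosSign (a0 : Matrix (Fin 2) (Fin 2) ℝ) := by
  intro i j k l
  rcases fin2_cases i with rfl | rfl <;> rcases fin2_cases j with rfl | rfl <;>
    rcases fin2_cases k with rfl | rfl <;> rcases fin2_cases l with rfl | rfl <;>
    norm_num [a0]

lemma posSign_sign {M : Matrix (Fin 2) (Fin 2) ℝ} (h : PosSign M) :
    (∀ i j, 0 < M i j) ∨ (∀ i j, M i j < 0) := by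
  have h00 : M 0 0 ≠ 0 := by
    intro h0
    have := h 0 0 0 0
    rw [h0] at this; simp at this
  rcases h00.lt_or_gt with hneg | hpos
  · right; intro i j
    have := h i j 0 0
    nlinarith
  · left; intro i j
    have := h i j 0 0
    nlinarith

lemma diag_det {D : Matrix (Fin 2) (Fin 2) ℝ} (hD : D.IsDiag) (hdet : D.det = 1) :
    D 0 0 * D 1 1 = 1 := by
  have h01 : D 0 1 = 0 := hD (by decide)
  have h10 : D 1 0 = 0 := hD (by decide)
  rw [Matrix.det_fin_two, h01, h10] at hdet
  linarith

lemma posSign_diag_mul {D M : Matrix (Fin 2) (Fin 2) ℝ} (hD : D.IsDiag)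
    (hdet : D.det = 1) (h : PosSign M) : PosSign (D * M) := by
  have key := diag_det hD hdet
  have h01 : D 0 1 = 0 := hD (by decide)
  have h10 : D 1 0 = 0 := hD (by decide)
  intro i j k l
  have e : ∀ (i j : Fin 2), (D * M) i j = D i i * M i j := by
    intro i j
    rcases fin2_cases i with rfl | rfl <;>
      simp [Matrix.mul_apply, Fin.sum_univ_two, h01, h10]
  have hne0 : D 0 0 ≠ 0 := by intro h0; rw [h0] at key; simp at key
  have hne1 : D 1 1 ≠ 0 := by intro h0; rw [h0] at key; simp at key
  have hsq0 : 0 < D 0 0 * D 0 0 := mul_self_pos.mpr hne0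
  have hsq1 : 0 < D 1 1 * D 1 1 := mul_self_pos.mpr hne1
  rw [e, e]
  rcases fin2_cases i with rfl | rfl <;> rcases fin2_cases k with rfl | rfl
  · nlinarith [h 0 j 0 l, hsq0]
  · nlinarith [h 0 j 1 l, key]
  · nlinarith [h 1 j 0 l, key]
  · nlinarith [h 1 j 1 l, hsq1]

lemma posSign_mul_diag {D M : Matrix (Fin 2) (Fin 2) ℝ} (hD : D.IsDiag)
    (hdet : D.det = 1) (h : PosSign M) : PosSign (M * D) := by
  have key := diag_det hD hdet
  have h01 : D 0 1 = 0 := hD (by decide)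
  have h10 : D 1 0 = 0 := hD (by decide)
  intro i j k l
  have e : ∀ (i j : Fin 2), (M * D) i j = M i j * D j j := by
    intro i j
    rcases fin2_cases j with rfl | rfl <;>
      simp [Matrix.mul_apply, Fin.sum_univ_two, h01, h10]
  have hne0 : D 0 0 ≠ 0 := by intro h0; rw [h0] at key; simp at key
  have hne1 : D 1 1 ≠ 0 := by intro h0; rw [h0] at key; simp at key
  have hsq0 : 0 < D 0 0 * D 0 0 := mul_self_pos.mpr hne0
  have hsq1 : 0 < D 1 1 * D 1 1 := mul_self_pos.mpr hne1
  rw [e, e]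
  rcases fin2_cases j with rfl | rfl <;> rcases fin2_cases l with rfl | rfl
  · nlinarith [h i 0 k 0, hsq0]
  · nlinarith [h i 0 k 1, key]
  · nlinarith [h i 1 k 0, key]
  · nlinarith [h i 1 k 1, hsq1]

lemma posSign_a0_mul {M : Matrix (Fin 2) (Fin 2) ℝ} (h : PosSign M) :
    PosSign ((a0 : Matrix (Fin 2) (Fin 2) ℝ) * M) := by
  have e : ∀ (i j : Fin 2),
      ((a0 : Matrix (Fin 2) (Fin 2) ℝ) * M) i j
        = (a0 : Matrix (Fin 2) (Fin 2) ℝ) i 0 * M 0 j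
          + (a0 : Matrix (Fin 2) (Fin 2) ℝ) i 1 * M 1 j := by
    intro i j; simp [Matrix.mul_apply, Fin.sum_univ_two]
  rcases posSign_sign h with hp | hn
  · intro i j k l
    rw [e, e]
    rcases fin2_cases i with rfl | rfl <;> rcases fin2_cases k with rfl | rfl <;>
      simp only [a0] <;> norm_num [Matrix.cons_val_zero, Matrix.cons_val_one] <;>
      nlinarith [hp 0 j, hp 1 j, hp 0 l, hp 1 l]
  · intro i j k l
    rw [e, e]
    rcases fin2_cases i with rfl | rfl <;> rcases fin2_cases k with rfl | rfl <;>
      simp only [a0] <;> norm_num [Matrix.cons_val_zero, Matrix.cons_val_one] <;>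
      nlinarith [hn 0 j, hn 1 j, hn 0 l, hn 1 l]

lemma isDiag_mul {A B : Matrix (Fin 2) (Fin 2) ℝ} (hA : A.IsDiag) (hB : B.IsDiag) :
    (A * B).IsDiag := by
  intro i j hij
  have hA01 : A 0 1 = 0 := hA (by decide)
  have hA10 : A 1 0 = 0 := hA (by decide)
  have hB01 : B 0 1 = 0 := hB (by decide)
  have hB10 : B 1 0 = 0 := hB (by decide)
  rcases fin2_cases i with rfl | rfl <;> rcases fin2_cases j with rfl | rfl <;>
    simp [Matrix.mul_apply, Fin.sum_univ_two, hA01, hA10, hB01, hB10] at hij ⊢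

lemma prod_isDiag : ∀ L : List SL2, (∀ x ∈ L, (x : Matrix (Fin 2) (Fin 2) ℝ).IsDiag) →
    ((L.prod : SL2) : Matrix (Fin 2) (Fin 2) ℝ).IsDiag := by
  intro L
  induction L with
  | nil => intro _; simpa using Matrix.isDiag_one
  | cons x L ih =>
    intro hall
    have hx := hall x (by simp)
    have hL := ih (fun y hy => hall y (by simp [hy]))
    simpa using isDiag_mul hx hL

lemma key_pos : ∀ L : List SL2,
    (∀ x ∈ L, x = a0 ∨ (x : Matrix (Fin 2) (Fin 2) ℝ).IsDiag) → a0 ∈ L →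
    PosSign ((L.prod : SL2) : Matrix (Fin 2) (Fin 2) ℝ) := by
  intro L
  induction L with
  | nil => intro _ hmem; simp at hmem
  | cons x L ih =>
    intro hall hmem
    have hx := hall x (by simp)
    by_cases ha : a0 ∈ L
    · have hp := ih (fun y hy => hall y (by simp [hy])) ha
      rcases hx with rfl | hdiag
      · simpa using posSign_a0_mul hp
      · have : PosSign ((x : Matrix (Fin 2) (Fin 2) ℝ) * (L.prod : Matrix (Fin 2) (Fin 2) ℝ)) :=
          posSign_diag_mul hdiag x.property hp
        simpa using this
    · have hxa : x = a0 := by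
        rcases List.mem_cons.mp hmem with h | h
        · exact h.symm
        · exact absurd h ha
      have hLdiag : ((L.prod : SL2) : Matrix (Fin 2) (Fin 2) ℝ).IsDiag := by
        apply prod_isDiag
        intro y hy
        rcases hall y (by simp [hy]) with rfl | h
        · exact absurd hy ha
        · exact h
      have hps : PosSign ((a0 : Matrix (Fin 2) (Fin 2) ℝ) * (L.prod : Matrix (Fin 2) (Fin 2) ℝ)) :=
        posSign_mul_diag hLdiag (L.prod).property posSign_a0
      rw [hxa]
      simpa using hps

theorem exists_sl2_semigroup_without_identity :
    ∃ a : Matrix.SpecialLinearGroup (Fin 2) ℝ, ¬ MemSLSemigroupGen a 1 := by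
  refine ⟨a0, ?_⟩
  rintro ⟨L, hall, hmem, hprod⟩
  have hp := key_pos L hall hmem
  rw [hprod] at hp
  have := hp 0 1 0 1
  simp [Matrix.one_apply] at this
end

section
/- If K/k is a separable field extension of degree 2, T is the image of K* in GL(2,k) under the regular representation, and g ∈ GL(2,k), then there exist t, t' ∈ T with g⁻¹ = t g t'. Consequently, every subsemigroup of GL(2,k) containing T is a subgroup. -/
/-!
Let `σ` be the nontrivial automorphism of `K/k`. By Dedekind's independence of characters and a
dimension count, every `k`-linear endomorphism of `K` has the form `f = a + c σ` with `a, c ∈ K`.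
For `t ∈ K` one computes `f ∘ t ∘ f = (a²t + c σ(c) σ(t)) + c (at + σ(at)) σ`, so choosing `t ≠ 0`
with `at` of trace zero makes `f t f` multiplication by some `s ∈ K*`, i.e. `f⁻¹ = t f s⁻¹`.
Hence a subsemigroup containing the torus contains the inverse of each of its elements.
-/

open Module

section Involution

variable {k K : Type*} [Field k] [Field K] [Algebra k K] {σ : K ≃ₐ[k] K}

theorem exists_ne_zero_apply_mul_eq_neg (hσ : σ ≠ 1) (hinv : Function.Involutive σ) (a : K) :
    ∃ t : K, t ≠ 0 ∧ σ (a * t) = -(a * t) := by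
  obtain ⟨x, hx⟩ := DFunLike.ne_iff.mp hσ
  rw [AlgEquiv.one_apply] at hx
  have hd : x - σ x ≠ 0 := sub_ne_zero.mpr (Ne.symm hx)
  have hσd : σ (x - σ x) = -(x - σ x) := by rw [map_sub, hinv x, neg_sub]
  by_cases ha : a = 0
  · exact ⟨1, one_ne_zero, by simp [ha]⟩
  · exact ⟨(x - σ x) / a, div_ne_zero hd ha, by rwa [mul_div_cancel₀ _ ha]⟩

theorem eq_zero_of_forall_mul_add_mul_apply_eq_zero (hσ : σ ≠ 1) {a c : K}
    (h : ∀ x, a * x + c * σ x = 0) : a = 0 ∧ c = 0 := by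
  obtain ⟨x, hx⟩ := DFunLike.ne_iff.mp hσ
  rw [AlgEquiv.one_apply] at hx
  have h1 : a + c = 0 := by simpa using h 1
  have hc : c = 0 := by
    have : c * (σ x - x) = 0 := by linear_combination h x - x * h1
    exact (mul_eq_zero.mp this).resolve_right (sub_ne_zero.mpr hx)
  exact ⟨by simpa [hc] using h1, hc⟩

theorem apply_mul_apply_eq_mul (hinv : Function.Involutive σ) {f : K → K} {a c t : K}
    (hf : ∀ x, f x = a * x + c * σ x) (ht : σ (a * t) = -(a * t)) (x : K) :
    f (t * f x) = (a * a * t + c * σ c * σ t) * x := by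
  rw [hf (t * f x), hf x, map_mul, map_add, map_mul, map_mul, hinv x]
  rw [map_mul] at ht
  linear_combination (c * σ x) * ht

variable [Algebra.IsQuadraticExtension k K]

theorem exists_eq_mul_add_mul_apply (hσ : σ ≠ 1) (f : Module.End k K) :
    ∃ a c : K, ∀ x, f x = a * x + c * σ x := by
  let Φ : K × K →ₗ[k] Module.End k K :=
    (LinearMap.mul k K).coprod ((LinearMap.mul k K).compl₂ σ.toLinearMap)
  have hΦ : ∀ a c x, Φ (a, c) x = a * x + c * σ x := fun _ _ _ => rfl
  have hinj : Function.Injective Φ := by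
    rw [← LinearMap.ker_eq_bot, LinearMap.ker_eq_bot']
    rintro ⟨a, c⟩ h
    obtain ⟨rfl, rfl⟩ := eq_zero_of_forall_mul_add_mul_apply_eq_zero hσ
      fun x => by rw [← hΦ, h, LinearMap.zero_apply]
    rfl
  have hrank : finrank k (K × K) = finrank k (Module.End k K) := by
    simp [finrank_prod, finrank_linearMap, Algebra.IsQuadraticExtension.finrank_eq_two]
  obtain ⟨⟨a, c⟩, rfl⟩ := (LinearMap.injective_iff_surjective_of_finrank_eq_finrank hrank).mp hinj f
  exact ⟨a, c, hΦ a c⟩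

end Involution

section Quadratic

variable {k K : Type*} [Field k] [Field K] [Algebra k K]
  [Algebra.IsQuadraticExtension k K] [Algebra.IsSeparable k K]

theorem exists_algEquiv_ne_one_involutive : ∃ σ : K ≃ₐ[k] K, σ ≠ 1 ∧ Function.Involutive σ := by
  have hcard : Nat.card (K ≃ₐ[k] K) = 2 :=
    (IsGalois.card_aut_eq_finrank k K).trans (Algebra.IsQuadraticExtension.finrank_eq_two k K)
  have : Nontrivial (K ≃ₐ[k] K) := Finite.one_lt_card_iff_nontrivial.mp (hcard ▸ one_lt_two)
  obtain ⟨σ, hσ⟩ := exists_ne (1 : K ≃ₐ[k] K)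
  have hsq : σ ^ 2 = 1 := hcard ▸ pow_card_eq_one'
  exact ⟨σ, hσ, fun x => by rw [← AlgEquiv.mul_apply, ← sq, hsq, AlgEquiv.one_apply]⟩

theorem exists_mul_lmul_mul_eq_lmul {f : Module.End k K} (hf : Function.Injective f) :
    ∃ t s : K, t ≠ 0 ∧ s ≠ 0 ∧ f * Algebra.lmul k K t * f = Algebra.lmul k K s := by
  obtain ⟨σ, hσ, hinv⟩ := exists_algEquiv_ne_one_involutive (k := k) (K := K)
  obtain ⟨a, c, hac⟩ := exists_eq_mul_add_mul_apply hσ f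
  obtain ⟨t, ht, hat⟩ := exists_ne_zero_apply_mul_eq_neg hσ hinv a
  have key := apply_mul_apply_eq_mul hinv hac hat
  refine ⟨t, _, ht, fun hs => ?_, LinearMap.ext key⟩
  have hf1 : t * f 1 = 0 := hf (by rw [key, hs, zero_mul, map_zero])
  have hf1' : f 1 = f 0 := by rw [(mul_eq_zero.mp hf1).resolve_left ht, map_zero]
  exact one_ne_zero (hf hf1')

theorem exists_inv_eq_leftMulMatrix_mul_mul_leftMulMatrix {ι : Type*} [Fintype ι] [DecidableEq ι]
    (b : Basis ι k K) (g : (Matrix ι ι k)ˣ) :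
    ∃ t t' : K, t ≠ 0 ∧ t' ≠ 0 ∧
      (g⁻¹).val = Algebra.leftMulMatrix b t * g.val * Algebra.leftMulMatrix b t' := by
  have hf : Function.Injective (Matrix.toLin b b g) := by
    refine Function.LeftInverse.injective (g := Matrix.toLin b b ↑g⁻¹) fun x => ?_
    rw [← LinearMap.comp_apply, ← Matrix.toLin_mul, Units.inv_mul, Matrix.toLin_one,
      LinearMap.id_apply]
  obtain ⟨t, s, ht, hs, hts⟩ := exists_mul_lmul_mul_eq_lmul hf
  have hg : g.val * Algebra.leftMulMatrix b t * g.val = Algebra.leftMulMatrix b s := by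
    simpa [LinearMap.toMatrix_mul, Algebra.leftMulMatrix_apply] using
      congrArg (LinearMap.toMatrix b b) hts
  have hs' : Algebra.leftMulMatrix b s * Algebra.leftMulMatrix b s⁻¹ = 1 := by
    rw [← map_mul, mul_inv_cancel₀ hs, map_one]
  refine ⟨t, s⁻¹, ht, inv_ne_zero hs, ?_⟩
  calc (g⁻¹).val = (g⁻¹).val * (g.val * Algebra.leftMulMatrix b t * g.val *
        Algebra.leftMulMatrix b s⁻¹) := by rw [hg, hs', mul_one]
    _ = Algebra.leftMulMatrix b t * g.val * Algebra.leftMulMatrix b s⁻¹ := by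
        simp only [mul_assoc, Units.inv_mul_cancel_left]

end Quadratic

theorem Subsemigroup.exists_subgroup_eq_of_inv_mem_mul_mul {G : Type*} [Group G]
    (S : Subsemigroup G) (T : Subgroup G) (hT : (T : Set G) ⊆ S)
    (h : ∀ g, ∃ t ∈ T, ∃ t' ∈ T, g⁻¹ = t * g * t') :
    ∃ H : Subgroup G, (H : Set G) = S := by
  have inv_mem {g : G} (hg : g ∈ S) : g⁻¹ ∈ S := by
    obtain ⟨t, ht, t', ht', e⟩ := h g
    rw [e]
    exact S.mul_mem (S.mul_mem (hT ht) hg) (hT ht')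
  exact ⟨{ carrier := S, mul_mem' := S.mul_mem, one_mem' := hT T.one_mem, inv_mem' := inv_mem },
    rfl⟩

theorem nonsplit_torus_semigroup
    {k K : Type*} [Field k] [Field K] [Algebra k K]
    [Algebra.IsSeparable k K] (hdeg : Module.finrank k K = 2)
    (b : Module.Basis (Fin 2) k K) :
    (∀ g : (Matrix (Fin 2) (Fin 2) k)ˣ, ∃ t t' : K, t ≠ 0 ∧ t' ≠ 0 ∧
        (g⁻¹).val = Algebra.leftMulMatrix b t * g.val * Algebra.leftMulMatrix b t') ∧
      ∀ S : Subsemigroup (Matrix (Fin 2) (Fin 2) k)ˣ,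
        (∀ u : (Matrix (Fin 2) (Fin 2) k)ˣ,
          (∃ x : K, x ≠ 0 ∧ u.val = Algebra.leftMulMatrix b x) → u ∈ S) →
        ∃ H : Subgroup (Matrix (Fin 2) (Fin 2) k)ˣ,
          (H : Set (Matrix (Fin 2) (Fin 2) k)ˣ) = (S : Set (Matrix (Fin 2) (Fin 2) k)ˣ) := by
  have : Algebra.IsQuadraticExtension k K := { finrank_eq_two' := hdeg }
  have hinv := exists_inv_eq_leftMulMatrix_mul_mul_leftMulMatrix b
  refine ⟨hinv, fun S hS => ?_⟩
  let T := (Units.map (Algebra.leftMulMatrix b).toMonoidHom).range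
  refine S.exists_subgroup_eq_of_inv_mem_mul_mul T ?_ fun g => ?_
  · rintro _ ⟨x, rfl⟩
    exact hS _ ⟨x, x.ne_zero, rfl⟩
  · obtain ⟨t, t', ht, ht', e⟩ := hinv g
    exact ⟨_, ⟨Units.mk0 t ht, rfl⟩, _, ⟨Units.mk0 t' ht', rfl⟩, Units.ext e⟩
end

section
/- If R is a ring such that for every ideal 𝔞 of R and every n the matrix ring M(n, R/𝔞) is Dedekind finite, then for every net σ over R, the net subgroup satisfies G(σ) = GL(n,R) ∩ (e + M(σ)); i.e., every invertible matrix of the form e + m with m ∈ M(σ) has its inverse also of this form. -/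
/-!
Replacing the diagonal ideals of `σ` by `R` gives a net `τ` with `M(σ) M(τ) ⊆ M(σ)`, so the
identity `g⁻¹ - e = -(g - e) - (g - e)(g⁻¹ - e)` reduces the claim to `τ`. Call an ideal `𝔞` good
if `g⁻¹ ∈ e + M(τ) + M(n, 𝔞)`. If `I` and `J` are good, so is every ideal containing `J I`; hence
an ideal `𝔪` maximal among the bad ones (Zorn) is prime. Modulo such an `𝔪`, for a fixed column
`j` the matrix `g` is block triangular for the partition of the indices `p` according to whether
`τ p j ⊆ 𝔪`, and in the Dedekind-finite ring `M(n, R/𝔪)` the inverse of a block triangular matrix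
is again block triangular. This makes `𝔪` good (the entries with `τ i j ⊄ 𝔪` are handled by the
maximality of `𝔪`), a contradiction.
-/

open Matrix

section Ring

variable {S : Type*} [Ring S]

theorem Units.exists_inv_sub_one_sub_mem_of_mul_mem {A : NonUnitalSubring S}
    {g : Sˣ} (hg : (g : S) - 1 ∈ A) {I : Ideal S} {J K : Set S}
    (hI : ∃ s ∈ A, ↑g⁻¹ - 1 - s ∈ I) (hJ : ∃ s ∈ A, ↑g⁻¹ - 1 - s ∈ J)
    (hK : ∀ a ∈ J, ∀ b ∈ I, a * b ∈ K) : ∃ s ∈ A, ↑g⁻¹ - 1 - s ∈ K := by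
  obtain ⟨s, hs, hu⟩ := hI
  obtain ⟨t, ht, hv⟩ := hJ
  -- `w` lies in `A` and in `I`, and `g⁻¹ - 1 - s = g⁻¹ w = w + t w + (g⁻¹ - 1 - t) w`.
  set w : S := g * (↑g⁻¹ - 1 - s)
  have hwA : w ∈ A := by
    have hw : w = -((g - 1) + s + (g - 1) * s) := by
      simp only [w, mul_sub, g.mul_inv]
      noncomm_ring
    rw [hw]
    exact neg_mem (add_mem (add_mem hg hs) (mul_mem hg hs))
  refine ⟨s + (w + t * w), add_mem hs (add_mem hwA (mul_mem ht hwA)), ?_⟩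
  convert hK _ hv w (I.mul_mem_left _ hu) using 1
  simp only [w, sub_mul, ← mul_assoc, g.inv_mul]
  noncomm_ring

theorem IsIdempotentElem.corner_add_mul_corner_add {e : S} (he : IsIdempotentElem e) (x y : S) :
    (e * x * e + (1 - e)) * (e * y * e + (1 - e)) = e * x * e * y * e + (1 - e) := by
  have hee : ∀ z, e * (e * z) = e * z := fun z => by rw [← mul_assoc, he.eq]
  simp only [mul_add, add_mul, mul_sub, sub_mul, mul_one, one_mul, mul_assoc, he.eq, hee]
  abel

theorem IsIdempotentElem.mul_inv_mul_eq_inv_mul [IsDedekindFiniteMonoid S] {e : S}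
    (he : IsIdempotentElem e) {g : Sˣ} (hg : e * g * e = g * e) :
    e * ↑g⁻¹ * e = ↑g⁻¹ * e := by
  have hg' : e * (g * e) = g * e := by rw [← mul_assoc, hg]
  have hleft : (e * ↑g⁻¹ * e + (1 - e)) * (e * g * e + (1 - e)) = 1 := by
    rw [he.corner_add_mul_corner_add]
    simp only [mul_assoc, hg', g.inv_mul_cancel_left, he.eq, add_sub_cancel]
  have hright : g * e * ↑g⁻¹ * e = e := by
    have h := mul_eq_one_symm hleft
    rw [he.corner_add_mul_corner_add, hg, ← eq_sub_iff_add_eq, sub_sub_cancel] at h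
    exact h
  calc e * ↑g⁻¹ * e = ↑g⁻¹ * (g * e * ↑g⁻¹ * e) := by simp only [mul_assoc, g.inv_mul_cancel_left]
    _ = ↑g⁻¹ * e := by rw [hright]

end Ring

namespace TwoSidedIdeal

variable {R : Type*} [Ring R]

theorem mem_iff_mk'_eq_zero (I : TwoSidedIdeal R) {x : R} : x ∈ I ↔ I.ringCon.mk' x = 0 := by
  rw [← mem_ker, ker_ringCon_mk']

theorem mem_sSup_of_directedOn {c : Set (TwoSidedIdeal R)} (hne : c.Nonempty)
    (hc : DirectedOn (· ≤ ·) c) {x : R} : x ∈ sSup c ↔ ∃ I ∈ c, x ∈ I := by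
  refine ⟨fun hx => ?_, fun ⟨I, hI, hx⟩ => le_sSup hI hx⟩
  let U : TwoSidedIdeal R := .mk' {x | ∃ I ∈ c, x ∈ I}
    (hne.imp fun I hI => ⟨hI, I.zero_mem⟩)
    (fun ⟨I, hI, hx⟩ ⟨J, hJ, hy⟩ =>
      let ⟨K, hK, hIK, hJK⟩ := hc I hI J hJ
      ⟨K, hK, K.add_mem (hIK hx) (hJK hy)⟩)
    (fun ⟨I, hI, hx⟩ => ⟨I, hI, I.neg_mem hx⟩)
    (fun ⟨I, hI, hy⟩ => ⟨I, hI, I.mul_mem_left _ _ hy⟩)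
    (fun ⟨I, hI, hx⟩ => ⟨I, hI, I.mul_mem_right _ _ hx⟩)
  have hU : sSup c ≤ U := sSup_le fun I hI y hy => (mem_mk' _ _ _ _ _ _ y).2 ⟨I, hI, hy⟩
  exact (mem_mk' _ _ _ _ _ _ x).1 (hU hx)

theorem mul_mem_of_mem_sup {I J 𝔪 : TwoSidedIdeal R} (h : ∀ a ∈ I, ∀ b ∈ J, a * b ∈ 𝔪)
    {a b : R} (ha : a ∈ I ⊔ 𝔪) (hb : b ∈ J ⊔ 𝔪) : a * b ∈ 𝔪 := by
  obtain ⟨x, hx, m, hm, rfl⟩ := mem_sup.1 ha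
  obtain ⟨y, hy, m', hm', rfl⟩ := mem_sup.1 hb
  rw [add_mul, mul_add]
  exact 𝔪.add_mem (𝔪.add_mem (h x hx y hy) (𝔪.mul_mem_left _ _ hm')) (𝔪.mul_mem_right _ _ hm)

variable {ι : Type*} [Fintype ι]

theorem mul_mem_matrix {I J K : TwoSidedIdeal R} (h : ∀ a ∈ I, ∀ b ∈ J, a * b ∈ K)
    {A B : Matrix ι ι R} (hA : A ∈ I.matrix ι) (hB : B ∈ J.matrix ι) : A * B ∈ K.matrix ι :=
  fun i j => K.finsetSum_mem _ _ fun r _ => h _ (hA i r) _ (hB r j)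

end TwoSidedIdeal

section BlockTriangular

variable {ι α T : Type*} [Fintype ι] [DecidableEq ι] [LinearOrder α] {b : ι → α}

theorem Matrix.BlockTriangular.units_inv [Ring T] [IsDedekindFiniteMonoid (Matrix ι ι T)]
    {g : (Matrix ι ι T)ˣ} (hg : BlockTriangular (g : Matrix ι ι T) b) :
    BlockTriangular (↑g⁻¹ : Matrix ι ι T) b := by
  intro p q hqp
  let e : Matrix ι ι T := diagonal fun r => if b r ≤ b q then 1 else 0
  have he : IsIdempotentElem e := by
    rw [IsIdempotentElem, diagonal_mul_diagonal]
    congr 1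
    ext r
    split_ifs <;> simp
  have hge : e * g * e = g * e := by
    ext r s
    simp only [e, diagonal_mul, mul_diagonal]
    by_cases hs : b s ≤ b q <;> by_cases hr : b r ≤ b q
    · simp [hs, hr]
    · simp [hs, hr, hg (hs.trans_lt (not_le.1 hr))]
    all_goals simp [hs]
  have := congr_fun₂ (he.mul_inv_mul_eq_inv_mul hge) p q
  simpa [e, diagonal_mul, mul_diagonal, hqp.not_ge] using this.symm

theorem Matrix.units_inv_apply_mem_of_blockTriangular_mod {R : Type*} [Ring R]
    {𝔪 : TwoSidedIdeal R} [IsDedekindFiniteMonoid (Matrix ι ι 𝔪.ringCon.Quotient)]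
    {g : (Matrix ι ι R)ˣ} (hg : ∀ p q, b q < b p → (g : Matrix ι ι R) p q ∈ 𝔪)
    {p q : ι} (hqp : b q < b p) : (↑g⁻¹ : Matrix ι ι R) p q ∈ 𝔪 := by
  let f := (𝔪.ringCon.mk' : R →+* 𝔪.ringCon.Quotient).mapMatrix (m := ι)
  let gbar : (Matrix ι ι 𝔪.ringCon.Quotient)ˣ := Units.map f.toMonoidHom g
  have hgbar : BlockTriangular (gbar : Matrix ι ι 𝔪.ringCon.Quotient) b := fun p q h => by
    simpa [gbar, f] using 𝔪.mem_iff_mk'_eq_zero.1 (hg p q h)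
  rw [𝔪.mem_iff_mk'_eq_zero]
  simpa [gbar, f, map_inv] using hgbar.units_inv hqp

end BlockTriangular

structure IdealNet (R : Type*) [Ring R] (ι : Type*) where
  ideal : ι → ι → TwoSidedIdeal R
  mul_mem : ∀ i j r, ∀ x ∈ ideal i r, ∀ y ∈ ideal r j, x * y ∈ ideal i j

namespace IdealNet

variable {R ι : Type*} [Ring R] [Fintype ι] (σ : IdealNet R ι)

def matrices : NonUnitalSubring (Matrix ι ι R) where
  carrier := {a | ∀ i j, a i j ∈ σ.ideal i j}
  add_mem' ha hb i j := (σ.ideal i j).add_mem (ha i j) (hb i j)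
  zero_mem' i j := (σ.ideal i j).zero_mem
  neg_mem' ha i j := (σ.ideal i j).neg_mem (ha i j)
  mul_mem' ha hb i j := (σ.ideal i j).finsetSum_mem _ _ fun r _ =>
    σ.mul_mem i j r _ (ha i r) _ (hb r j)

variable [DecidableEq ι]

def withTopDiag : IdealNet R ι where
  ideal i j := if i = j then ⊤ else σ.ideal i j
  mul_mem i j r x hx y hy := by
    by_cases hij : i = j
    · simp [hij]
    rcases eq_or_ne i r with rfl | hir
    · simpa [hij] using (σ.ideal i j).mul_mem_left x y (by simpa [hij] using hy)
    rcases eq_or_ne r j with rfl | hrj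
    · simpa [hij] using (σ.ideal i r).mul_mem_right x y (by simpa [hir] using hx)
    simp only [hij, hir, hrj, if_false] at hx hy ⊢
    exact σ.mul_mem i j r x hx y hy

theorem matrices_le_withTopDiag : σ.matrices ≤ σ.withTopDiag.matrices := fun a ha i j => by
  by_cases hij : i = j <;> simp [withTopDiag, hij, ha i j]

theorem mul_mem_matrices_of_mem_withTopDiag {a b : Matrix ι ι R} (ha : a ∈ σ.matrices)
    (hb : b ∈ σ.withTopDiag.matrices) : a * b ∈ σ.matrices := fun i j =>
  (σ.ideal i j).finsetSum_mem _ _ fun r _ => by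
    rcases eq_or_ne r j with rfl | hrj
    · exact (σ.ideal i r).mul_mem_right _ _ (ha i r)
    · exact σ.mul_mem i j r _ (ha i r) _ (by simpa [withTopDiag, hrj] using hb r j)

/-- `𝔞` is good for `g`: `g⁻¹ ∈ e + M(σ) + M(n, 𝔞)`. -/
def InvMemMod (g : (Matrix ι ι R)ˣ) (𝔞 : TwoSidedIdeal R) : Prop :=
  ∃ s ∈ σ.matrices, ↑g⁻¹ - 1 - s ∈ 𝔞.matrix ι

variable {σ} {g : (Matrix ι ι R)ˣ}

theorem invMemMod_top : σ.InvMemMod g ⊤ := ⟨0, zero_mem _, by simp⟩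

theorem invMemMod_bot_iff : σ.InvMemMod g ⊥ ↔ (↑g⁻¹ - 1 : Matrix ι ι R) ∈ σ.matrices := by
  simp [InvMemMod, sub_eq_zero]

theorem invMemMod_iff {𝔞 : TwoSidedIdeal R} :
    σ.InvMemMod g 𝔞 ↔ ∀ i j, (↑g⁻¹ - 1 : Matrix ι ι R) i j ∈ σ.ideal i j ⊔ 𝔞 := by
  refine ⟨fun ⟨s, hs, h⟩ i j => TwoSidedIdeal.mem_sup.2 ⟨s i j, hs i j, _, h i j, by simp⟩,
    fun h => ?_⟩
  choose s hs t ht hst using fun i j => TwoSidedIdeal.mem_sup.1 (h i j)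
  refine ⟨of s, hs, (TwoSidedIdeal.mem_matrix _ _ _).2 fun i j => ?_⟩
  rw [Matrix.sub_apply, ← hst i j, of_apply, add_sub_cancel_left]
  exact ht i j

theorem InvMemMod.of_mul_mem (hg : (g : Matrix ι ι R) - 1 ∈ σ.matrices) {I J K : TwoSidedIdeal R}
    (hI : σ.InvMemMod g I) (hJ : σ.InvMemMod g J) (hK : ∀ a ∈ J, ∀ b ∈ I, a * b ∈ K) :
    σ.InvMemMod g K :=
  Units.exists_inv_sub_one_sub_mem_of_mul_mem (I := (I.matrix ι).asIdeal) hg hI hJ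
    fun _ ha _ hb => TwoSidedIdeal.mul_mem_matrix hK ha hb

theorem not_invMemMod_sSup {c : Set (TwoSidedIdeal R)} (hc : ∀ 𝔞 ∈ c, ¬σ.InvMemMod g 𝔞)
    (hchain : IsChain (· ≤ ·) c) (hne : c.Nonempty) : ¬σ.InvMemMod g (sSup c) := by
  rintro ⟨s, hs, hsup⟩
  have hentry (ij : ι × ι) : ∃ 𝔟 ∈ c, (↑g⁻¹ - 1 - s) ij.1 ij.2 ∈ 𝔟 :=
    (TwoSidedIdeal.mem_sSup_of_directedOn hne hchain.directedOn).1 (hsup ij.1 ij.2)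
  choose F hFc hF using hentry
  have : Nonempty c := hne.to_subtype
  obtain ⟨𝔟, hle⟩ := hchain.directedOn.directed_val.finite_le fun ij => (⟨F ij, hFc ij⟩ : c)
  exact hc 𝔟 𝔟.2 ⟨s, hs, fun i j => hle (i, j) (hF (i, j))⟩

theorem exists_maximal_not_invMemMod (h : ¬σ.InvMemMod g ⊥) :
    ∃ 𝔪, ¬σ.InvMemMod g 𝔪 ∧ ∀ 𝔞, 𝔪 < 𝔞 → σ.InvMemMod g 𝔞 := by
  obtain ⟨𝔪, -, h𝔪⟩ := zorn_le_nonempty₀ {𝔞 | ¬σ.InvMemMod g 𝔞}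
    (fun c hc hchain 𝔞 h𝔞 => ⟨sSup c, not_invMemMod_sSup hc hchain ⟨𝔞, h𝔞⟩, fun _ => le_sSup⟩) ⊥ h
  exact ⟨𝔪, h𝔪.prop, fun 𝔞 hlt => not_not.1 (h𝔪.not_prop_of_gt hlt)⟩

theorem le_or_le_of_forall_mul_mem (hg : (g : Matrix ι ι R) - 1 ∈ σ.matrices) {𝔪 : TwoSidedIdeal R}
    (h𝔪 : ¬σ.InvMemMod g 𝔪) (hlt : ∀ 𝔞, 𝔪 < 𝔞 → σ.InvMemMod g 𝔞) {I J : TwoSidedIdeal R}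
    (hIJ : ∀ a ∈ I, ∀ b ∈ J, a * b ∈ 𝔪) : I ≤ 𝔪 ∨ J ≤ 𝔪 := by
  by_contra! h
  have hsup {𝔞 : TwoSidedIdeal R} (h𝔞 : ¬𝔞 ≤ 𝔪) : σ.InvMemMod g (𝔞 ⊔ 𝔪) :=
    hlt _ (right_lt_sup.2 h𝔞)
  exact h𝔪 ((hsup h.2).of_mul_mem hg (hsup h.1) fun a ha b hb =>
    TwoSidedIdeal.mul_mem_of_mem_sup hIJ ha hb)

theorem invMemMod_of_forall_lt (hσ : ∀ i, σ.ideal i i = ⊤)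
    (hg : (g : Matrix ι ι R) - 1 ∈ σ.matrices) {𝔪 : TwoSidedIdeal R}
    [IsStablyFiniteRing 𝔪.ringCon.Quotient] (hne : 𝔪 ≠ ⊤)
    (hprime : ∀ I J : TwoSidedIdeal R, (∀ a ∈ I, ∀ b ∈ J, a * b ∈ 𝔪) → I ≤ 𝔪 ∨ J ≤ 𝔪)
    (hlt : ∀ 𝔞, 𝔪 < 𝔞 → σ.InvMemMod g 𝔞) : σ.InvMemMod g 𝔪 := by
  classical
  rw [invMemMod_iff]
  intro i j
  by_cases hij : σ.ideal i j ≤ 𝔪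
  · have hjj : ¬σ.ideal j j ≤ 𝔪 := by rwa [hσ, top_le_iff]
    have hji : i ≠ j := by rintro rfl; exact hjj hij
    refine TwoSidedIdeal.mem_sup_right ?_
    rw [Matrix.sub_apply, one_apply_ne hji, sub_zero]
    refine units_inv_apply_mem_of_blockTriangular_mod (b := fun p => decide (σ.ideal p j ≤ 𝔪))
      (fun p q hqp => ?_) (by simp [Bool.lt_iff, hij, hjj])
    simp only [Bool.lt_iff, decide_eq_false_iff_not, decide_eq_true_eq] at hqp
    obtain ⟨hq, hp⟩ := hqp
    have hpq : p ≠ q := by rintro rfl; exact hq hp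
    have hσpq : σ.ideal p q ≤ 𝔪 :=
      (hprime _ _ fun a ha b hb => hp (σ.mul_mem p j q a ha b hb)).resolve_right hq
    simpa [hpq] using hσpq (hg p q)
  · have := invMemMod_iff.1 (hlt _ (right_lt_sup.2 hij)) i j
    rwa [← sup_assoc, sup_idem] at this

theorem inv_sub_one_mem_matrices_of_diag_eq_top
    (hR : ∀ 𝔞 : TwoSidedIdeal R, IsStablyFiniteRing 𝔞.ringCon.Quotient)
    (hσ : ∀ i, σ.ideal i i = ⊤) (hg : (g : Matrix ι ι R) - 1 ∈ σ.matrices) :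
    (↑g⁻¹ - 1 : Matrix ι ι R) ∈ σ.matrices := by
  rw [← invMemMod_bot_iff]
  by_contra h
  obtain ⟨𝔪, h𝔪, hlt⟩ := exists_maximal_not_invMemMod h
  have hne : 𝔪 ≠ ⊤ := by rintro rfl; exact h𝔪 invMemMod_top
  have := hR 𝔪
  exact h𝔪 (invMemMod_of_forall_lt hσ hg hne
    (fun _ _ => le_or_le_of_forall_mul_mem hg h𝔪 hlt) hlt)

theorem inv_sub_one_mem_matrices
    (hR : ∀ 𝔞 : TwoSidedIdeal R, IsStablyFiniteRing 𝔞.ringCon.Quotient)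
    (hg : (g : Matrix ι ι R) - 1 ∈ σ.matrices) : (↑g⁻¹ - 1 : Matrix ι ι R) ∈ σ.matrices := by
  have hdiag : (↑g⁻¹ - 1 : Matrix ι ι R) ∈ σ.withTopDiag.matrices :=
    inv_sub_one_mem_matrices_of_diag_eq_top hR (by simp [withTopDiag])
      (σ.matrices_le_withTopDiag hg)
  have hinv : (↑g⁻¹ - 1 : Matrix ι ι R) = -((g : Matrix ι ι R) - 1) - (↑g - 1) * (↑g⁻¹ - 1) := by
    simp only [sub_mul, mul_sub, g.mul_inv, mul_one, one_mul]
    abel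
  rw [hinv]
  exact sub_mem (neg_mem hg) (σ.mul_mem_matrices_of_mem_withTopDiag hg hdiag)

end IdealNet

theorem net_subgroup_eq_cap_of_dedekind_finite
    {R : Type*} [Ring R]
    (hDF : ∀ (𝔞 : TwoSidedIdeal R) (m : ℕ)
      (x y : Matrix (Fin m) (Fin m) 𝔞.ringCon.Quotient), x * y = 1 → y * x = 1)
    {n : ℕ} (σ : Fin n → Fin n → TwoSidedIdeal R)
    (hnet : ∀ i j r : Fin n, ∀ x ∈ σ i r, ∀ y ∈ σ r j, x * y ∈ σ i j)
    (g : (Matrix (Fin n) (Fin n) R)ˣ)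
    (hg : ∀ i j, g.val i j - (1 : Matrix (Fin n) (Fin n) R) i j ∈ σ i j) :
    ∀ i j, (g⁻¹).val i j - (1 : Matrix (Fin n) (Fin n) R) i j ∈ σ i j :=
  IdealNet.inv_sub_one_mem_matrices (σ := ⟨σ, hnet⟩)
    (fun 𝔞 => ⟨fun m => ⟨hDF 𝔞 m _ _⟩⟩) hg
end

section
/- Let a be an invertible n×n matrix over a division ring and suppose b₁ a(n,n) b₂ is a diagonal matrix with entries d₁,…,d_{n−1}, where b₁,b₂ ∈ GL(n−1,T) are extended to GL(n,T) by a 1 in position (n,n). Set c = b₁ a b₂. Then (c⁻¹)_{nn} = (a⁻¹)_{nn}, and (c⁻¹)_{nn} ≠ 0 if and only if all d_k ≠ 0. -/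
/-- Embedding of `M(n,T)` into `M(n+1,T)` adding a `1` in the bottom-right corner. -/
def extendMatrix {n : ℕ} {T : Type*} [Ring T] (b : Matrix (Fin n) (Fin n) T) :
    Matrix (Fin (n + 1)) (Fin (n + 1)) T :=
  Matrix.reindex finSumFinEquiv finSumFinEquiv
    (Matrix.fromBlocks b 0 0 (1 : Matrix (Fin 1) (Fin 1) T))

open Matrix

lemma extendMatrix_submatrix {n : ℕ} {T : Type*} [Ring T] (b : Matrix (Fin n) (Fin n) T) :
    (extendMatrix b).submatrix finSumFinEquiv finSumFinEquiv =
      fromBlocks b 0 0 (1 : Matrix (Fin 1) (Fin 1) T) := by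
  ext i j
  simp [extendMatrix]

lemma sandwich {n : ℕ} {T : Type*} [Ring T] (p q : Matrix (Fin n) (Fin n) T)
    (P : Matrix (Fin n) (Fin n) T) (Q : Matrix (Fin n) (Fin 1) T)
    (R : Matrix (Fin 1) (Fin n) T) (S : Matrix (Fin 1) (Fin 1) T) :
    fromBlocks p 0 0 (1 : Matrix (Fin 1) (Fin 1) T) * fromBlocks P Q R S *
        fromBlocks q 0 0 (1 : Matrix (Fin 1) (Fin 1) T) =
      fromBlocks (p * P * q) (p * Q) (R * q) S := by
  simp [fromBlocks_multiply, Matrix.mul_assoc]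

lemma sandwich' {n : ℕ} {T : Type*} [Ring T] (p q : Matrix (Fin n) (Fin n) T)
    (X : Matrix (Fin n ⊕ Fin 1) (Fin n ⊕ Fin 1) T) :
    fromBlocks p 0 0 (1 : Matrix (Fin 1) (Fin 1) T) * X *
        fromBlocks q 0 0 (1 : Matrix (Fin 1) (Fin 1) T) =
      fromBlocks (p * X.toBlocks₁₁ * q) (p * X.toBlocks₁₂) (X.toBlocks₂₁ * q) X.toBlocks₂₂ := by
  conv_lhs => rw [← fromBlocks_toBlocks X]
  rw [sandwich]

theorem corner_entry_of_diagonalized_minor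
    {n : ℕ} {T : Type*} [DivisionRing T] (hn : 1 ≤ n)
    (a : (Matrix (Fin (n + 1)) (Fin (n + 1)) T)ˣ)
    (b₁ b₂ : Matrix (Fin n) (Fin n) T) (hb₁ : IsUnit b₁) (hb₂ : IsUnit b₂)
    (d : Fin n → T)
    (hdiag : b₁ * (a.val.submatrix Fin.castSucc Fin.castSucc) * b₂ = Matrix.diagonal d)
    (c : (Matrix (Fin (n + 1)) (Fin (n + 1)) T)ˣ)
    (hc : c.val = extendMatrix b₁ * a.val * extendMatrix b₂) :
    (c⁻¹).val (Fin.last n) (Fin.last n) = (a⁻¹).val (Fin.last n) (Fin.last n) ∧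
      ((c⁻¹).val (Fin.last n) (Fin.last n) ≠ 0 ↔ ∀ k, d k ≠ 0) := by
  classical
  letI := hb₁.invertible
  letI := hb₂.invertible
  set e : Fin n ⊕ Fin 1 ≃ Fin (n + 1) := finSumFinEquiv with he_def
  have helast : e (Sum.inr 0) = Fin.last n := by
    apply Fin.ext
    simp [he_def]
  have helft : ∀ i : Fin n, e (Sum.inl i) = Fin.castSucc i := by
    intro i
    apply Fin.ext
    simp [he_def]
  -- extendMatrix multiplicativity facts
  have hext_mul : ∀ x y : Matrix (Fin n) (Fin n) T,
      extendMatrix x * extendMatrix y = extendMatrix (x * y) := by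
    intro x y
    unfold extendMatrix
    simp only [reindex_apply]
    rw [Matrix.submatrix_mul_equiv _ _ _ finSumFinEquiv.symm _]
    congr 1
    simp [fromBlocks_multiply]
  have hext_one : extendMatrix (1 : Matrix (Fin n) (Fin n) T) = 1 := by
    unfold extendMatrix
    rw [fromBlocks_one, Matrix.reindex_apply, Matrix.submatrix_one_equiv]
  -- the inverse of c
  have hmul1 : c.val * (extendMatrix (⅟ b₂) * (a⁻¹).val * extendMatrix (⅟ b₁)) = 1 := by
    rw [hc]
    have h2 : extendMatrix b₂ * extendMatrix (⅟ b₂) = 1 := by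
      rw [hext_mul, mul_invOf_self, hext_one]
    have h1 : extendMatrix b₁ * extendMatrix (⅟ b₁) = 1 := by
      rw [hext_mul, mul_invOf_self, hext_one]
    have ha : a.val * (a⁻¹).val = 1 := a.mul_inv
    calc extendMatrix b₁ * a.val * extendMatrix b₂ *
          (extendMatrix (⅟ b₂) * (a⁻¹).val * extendMatrix (⅟ b₁))
        = extendMatrix b₁ * (a.val * ((extendMatrix b₂ * extendMatrix (⅟ b₂)) *
            ((a⁻¹).val * extendMatrix (⅟ b₁)))) := by
          simp only [Matrix.mul_assoc]
      _ = 1 := by rw [h2, one_mul, ← Matrix.mul_assoc a.val, ha, one_mul, h1]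
  have hcinv : (c⁻¹).val = extendMatrix (⅟ b₂) * (a⁻¹).val * extendMatrix (⅟ b₁) :=
    Units.inv_eq_of_mul_eq_one_right hmul1
  -- block structure of N := (c⁻¹).val reindexed
  set N : Matrix (Fin n ⊕ Fin 1) (Fin n ⊕ Fin 1) T := (c⁻¹).val.submatrix e e with hN_def
  set Ainv : Matrix (Fin n ⊕ Fin 1) (Fin n ⊕ Fin 1) T := (a⁻¹).val.submatrix e e with hAinv_def
  have hNblk : N = fromBlocks (⅟ b₂ * Ainv.toBlocks₁₁ * ⅟ b₁) (⅟ b₂ * Ainv.toBlocks₁₂)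
      (Ainv.toBlocks₂₁ * ⅟ b₁) Ainv.toBlocks₂₂ := by
    rw [hN_def, hcinv, ← Matrix.submatrix_mul_equiv _ _ _ e _,
      ← Matrix.submatrix_mul_equiv _ _ _ e _, extendMatrix_submatrix, extendMatrix_submatrix,
      ← hAinv_def, sandwich']
  -- first part
  have hcorner : (c⁻¹).val (Fin.last n) (Fin.last n) = (a⁻¹).val (Fin.last n) (Fin.last n) := by
    have h1 : (c⁻¹).val (Fin.last n) (Fin.last n) = N (Sum.inr 0) (Sum.inr 0) := by
      rw [hN_def, Matrix.submatrix_apply, helast]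
    rw [h1, hNblk]
    simp only [fromBlocks_apply₂₂]
    have h2 : Ainv.toBlocks₂₂ 0 0 = (a⁻¹).val (e (Sum.inr 0)) (e (Sum.inr 0)) := rfl
    rw [h2, helast]
  refine ⟨hcorner, ?_⟩
  -- block structure of M := c.val reindexed
  set M : Matrix (Fin n ⊕ Fin 1) (Fin n ⊕ Fin 1) T := c.val.submatrix e e with hM_def
  set Amat : Matrix (Fin n ⊕ Fin 1) (Fin n ⊕ Fin 1) T := a.val.submatrix e e with hAmat_def
  have hMblk : M = fromBlocks (Matrix.diagonal d) (b₁ * Amat.toBlocks₁₂)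
      (Amat.toBlocks₂₁ * b₂) Amat.toBlocks₂₂ := by
    have h11 : Amat.toBlocks₁₁ = a.val.submatrix Fin.castSucc Fin.castSucc := by
      ext i j
      simp [Matrix.toBlocks₁₁, hAmat_def, helft]
    rw [hM_def, hc, ← Matrix.submatrix_mul_equiv _ _ _ e _,
      ← Matrix.submatrix_mul_equiv _ _ _ e _, extendMatrix_submatrix, extendMatrix_submatrix,
      ← hAmat_def, sandwich', h11, hdiag]
  have hMN : M * N = 1 := by
    rw [hM_def, hN_def, Matrix.submatrix_mul_equiv, c.mul_inv, Matrix.submatrix_one_equiv]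
  have hentry : (c⁻¹).val (Fin.last n) (Fin.last n) = N (Sum.inr 0) (Sum.inr 0) := by
    rw [hN_def, Matrix.submatrix_apply, helast]
  rw [hentry]
  have hM11 : ∀ i j : Fin n, M (Sum.inl i) (Sum.inl j) = if i = j then d i else 0 := by
    intro i j
    rw [hMblk]
    simp [Matrix.diagonal_apply]
  constructor
  · -- N corner nonzero → all d k ≠ 0
    intro hne k hk
    have hzero : ∀ j : Fin n, M (Sum.inl k) (Sum.inl j) = 0 := by
      intro j
      rw [hM11]
      rcases eq_or_ne k j with rfl | hkj
      · rw [if_pos rfl, hk]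
      · rw [if_neg hkj]
    have e1 : M (Sum.inl k) (Sum.inr 0) * N (Sum.inr 0) (Sum.inl k) = 1 := by
      have h := congrFun (congrFun hMN (Sum.inl k)) (Sum.inl k)
      rw [Matrix.mul_apply, Fintype.sum_sum_type] at h
      simpa [hzero, Matrix.one_apply, Fin.sum_univ_one] using h
    have e2 : M (Sum.inl k) (Sum.inr 0) * N (Sum.inr 0) (Sum.inr 0) = 0 := by
      have h := congrFun (congrFun hMN (Sum.inl k)) (Sum.inr 0)
      rw [Matrix.mul_apply, Fintype.sum_sum_type] at h
      simpa [hzero, Matrix.one_apply, Fin.sum_univ_one] using h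
    have hβ : M (Sum.inl k) (Sum.inr 0) ≠ 0 := left_ne_zero_of_mul_eq_one e1
    exact hne ((mul_eq_zero.mp e2).resolve_left hβ)
  · -- all d k ≠ 0 → N corner nonzero
    intro hd hδ
    have hcol : ∀ j : Fin n, N (Sum.inl j) (Sum.inr 0) = 0 := by
      intro j
      have h := congrFun (congrFun hMN (Sum.inl j)) (Sum.inr 0)
      rw [Matrix.mul_apply, Fintype.sum_sum_type] at h
      simp only [Fin.sum_univ_one, hδ, mul_zero, add_zero] at h
      simp only [hM11, ite_mul, zero_mul, Finset.sum_ite_eq, Finset.mem_univ, if_true,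
        Matrix.one_apply] at h
      have h' : d j * N (Sum.inl j) (Sum.inr 0) = 0 := by simpa using h
      exact (mul_eq_zero.mp h').resolve_left (hd j)
    have h := congrFun (congrFun hMN (Sum.inr 0)) (Sum.inr 0)
    rw [Matrix.mul_apply, Fintype.sum_sum_type] at h
    simp [hcol, hδ, Matrix.one_apply, Fin.sum_univ_one] at h
end
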